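/- arXiv:2406.06859 — 11 statements merged into one kernel-verified Lean document; each statement's English description precedes it below -/
import Mathlib

section
/- Let 𝕜 be ℝ or ℂ and 0 < p < ∞. For n ≥ 2 set a_n = (n−1)/n. Let (t_n)_{n≥2} be a bounded sequence in 𝕜 and let (k_j)_{j≥1} be a strictly increasing sequence of positive integers with k_1 > 2p. If for every j the absolutely convergent series ∑_{n=2}^∞ t_n a_n^{1/p} n^{-k_j/p} equals 0, then t_n = 0 for all n ≥ 2. -/
/-!
Induct on `N`: once `t n = 0` for `2 ≤ n < N`, multiply the `j`-th equation by `N ^ (k j / p)`.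
Every surviving term carries the factor `(N / n) ^ (k j / p)`, which is `1` for `n = N` and tends
to `0` for `n > N`, while `k 1 / p > 1` makes `(N / n) ^ (k 1 / p)` a summable dominating
sequence. Dominated convergence in `j` leaves `((N - 1) / N) ^ (1 / p) • t N = 0`.
-/

open Filter Topology

lemma summable_div_natCast_rpow {N : ℝ} (hN : 0 ≤ N) {σ : ℝ} (hσ : 1 < σ) :
    Summable fun n : ℕ => (N / n) ^ σ := by
  simp_rw [Real.div_rpow hN (Nat.cast_nonneg _), div_eq_mul_inv]
  exact (Real.summable_nat_rpow_inv.2 hσ).mul_left _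

theorem eq_zero_of_tsum_rpow_neg_smul_eq_zero {E : Type*} [NormedAddCommGroup E]
    [NormedSpace ℝ E] [CompleteSpace E] {s : Set ℕ} (hs : 0 ∉ s) {b : ℕ → E} {C : ℝ}
    (hb : ∀ n ∈ s, ‖b n‖ ≤ C) {σ : ℕ → ℝ} (hσ : Tendsto σ atTop atTop) {σ₀ : ℝ}
    (hσ₀ : 1 < σ₀) (hσ₀σ : ∀ i, σ₀ ≤ σ i)
    (hzero : ∀ i, ∑' n : s, (n : ℝ) ^ (-σ i) • b n = 0) :
    ∀ N ∈ s, b N = 0 := by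
  intro N
  induction N using Nat.strong_induction_on with
  | _ N ih =>
  intro hN
  have hNpos : (0 : ℝ) < N := Nat.cast_pos.2 (Nat.pos_of_ne_zero fun h => hs (h ▸ hN))
  have hnpos (n : s) : (0 : ℝ) < n := Nat.cast_pos.2 (Nat.pos_of_ne_zero fun h => hs (h ▸ n.2))
  let F (i : ℕ) (n : s) : E := ((N : ℝ) / n) ^ σ i • b n
  have hF (i : ℕ) : ∑' n, F i n = 0 := by
    have hFi : F i = fun n : s => (N : ℝ) ^ σ i • (n : ℝ) ^ (-σ i) • b n := by
      ext n
      rw [smul_smul, Real.rpow_neg (hnpos n).le, ← div_eq_mul_inv,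
        ← Real.div_rpow hNpos.le (hnpos n).le]
    rw [hFi, tsum_const_smul'', hzero, smul_zero]
  have hlim (n : s) : Tendsto (F · n) atTop (𝓝 ((Pi.single ⟨N, hN⟩ (b N) : s → E) n)) := by
    rcases lt_trichotomy (n : ℕ) N with hlt | heq | hgt
    · simp [F, ih n hlt n.2, Subtype.ext_iff, hlt.ne]
    · obtain rfl : n = ⟨N, hN⟩ := Subtype.ext heq
      simp [F, div_self hNpos.ne']
    · have hbase : Tendsto (fun i => ((N : ℝ) / n) ^ σ i) atTop (𝓝 0) :=
        (tendsto_rpow_atTop_of_base_lt_one _ (by linarith [div_pos hNpos (hnpos n)])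
          ((div_lt_one (hnpos n)).2 (by exact_mod_cast hgt))).comp hσ
      simpa [Pi.single_apply, Subtype.ext_iff, hgt.ne'] using hbase.smul_const (b n)
  have hbound (i : ℕ) (n : s) : ‖F i n‖ ≤ ((N : ℝ) / n) ^ σ₀ * C := by
    have hbase : 0 < (N : ℝ) / n := div_pos hNpos (hnpos n)
    rcases lt_or_ge (n : ℕ) N with hlt | hge
    · simp only [F, ih n hlt n.2, smul_zero, norm_zero]
      exact mul_nonneg (by positivity) ((norm_nonneg _).trans (hb N hN))
    · rw [norm_smul, Real.norm_of_nonneg (Real.rpow_nonneg hbase.le _)]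
      exact mul_le_mul (Real.rpow_le_rpow_of_exponent_ge hbase
          ((div_le_one (hnpos n)).2 (by exact_mod_cast hge)) (hσ₀σ i)) (hb n n.2) (norm_nonneg _)
        (by positivity)
  have hsum : Summable fun n : s => ((N : ℝ) / n) ^ σ₀ * C :=
    ((summable_div_natCast_rpow hNpos.le hσ₀).mul_right C).subtype s
  have hconv := tendsto_tsum_of_dominated_convergence hsum hlim (Eventually.of_forall hbound)
  simp only [hF, tsum_pi_single] at hconv
  exact tendsto_nhds_unique hconv tendsto_const_nhds

theorem stmt1_general {𝕜 : Type} [RCLike 𝕜] (p : ℝ) (hp : 0 < p)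
    (t : ℕ → 𝕜) (ht : ∃ C : ℝ, ∀ n, ‖t n‖ ≤ C)
    (k : ℕ → ℕ) (hk : StrictMono k)
    (hk1 : 2 * p < (k 1 : ℝ))
    (hzero : ∀ j : ℕ, 1 ≤ j →
      ∑' n : {n : ℕ // 2 ≤ n},
        (((((n.1 : ℝ) - 1) / (n.1 : ℝ)) ^ (1 / p) * (n.1 : ℝ) ^ (-(k j : ℝ) / p) : ℝ)
          • t n.1) = 0) :
    ∀ n : ℕ, 2 ≤ n → t n = 0 := by
  obtain ⟨C, hC⟩ := ht
  set c : ℕ → ℝ := fun n => (((n : ℝ) - 1) / n) ^ (1 / p)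
  have hc (n : ℕ) (hn : 2 ≤ n) : 0 < c n ∧ c n ≤ 1 := by
    have hn' : (2 : ℝ) ≤ n := by exact_mod_cast hn
    exact ⟨Real.rpow_pos_of_pos (div_pos (by linarith) (by linarith)) _,
      Real.rpow_le_one (div_nonneg (by linarith) (by linarith))
        (div_le_one_of_le₀ (by linarith) (by linarith)) (by positivity)⟩
  have hbound : ∀ n ∈ {n : ℕ | 2 ≤ n}, ‖c n • t n‖ ≤ C := fun n hn => by
    rw [norm_smul, Real.norm_of_nonneg (hc n hn).1.le]
    exact (mul_le_of_le_one_left (norm_nonneg _) (hc n hn).2).trans (hC n)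
  have hσ : Tendsto (fun i => (k (i + 1) : ℝ) / p) atTop atTop :=
    (tendsto_natCast_atTop_atTop.comp
      (hk.tendsto_atTop.comp (tendsto_add_atTop_nat 1))).atTop_div_const hp
  have hσ₀σ (i : ℕ) : (k 1 : ℝ) / p ≤ k (i + 1) / p :=
    div_le_div_of_nonneg_right (by exact_mod_cast hk.monotone (by omega)) hp.le
  have hseries (i : ℕ) :
      ∑' n : {n : ℕ | 2 ≤ n}, (n : ℝ) ^ (-(k (i + 1) / p : ℝ)) • c n • t n = 0 := by
    refine (tsum_congr fun n => ?_).trans (hzero (i + 1) le_add_self)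
    rw [smul_smul, mul_comm, neg_div]
  intro n hn
  have hcn := eq_zero_of_tsum_rpow_neg_smul_eq_zero (by simp) hbound hσ
    ((one_lt_div hp).2 (by linarith)) hσ₀σ hseries n hn
  exact (smul_eq_zero.1 hcn).resolve_left (hc n hn).1.ne'

/-- Let `𝕜` be `ℝ` or `ℂ` and `0 < p < ∞`.  For `n ≥ 2` set
`a n = (n-1)/n`.  Let `(t_n)_{n ≥ 2}` be a bounded sequence in `𝕜` and let
`(k_j)_{j ≥ 1}` be a strictly increasing sequence of positive integers with
`k 1 > 2p`.  If for every `j ≥ 1` the (absolutely convergent) series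
`∑_{n=2}^∞ t_n a_n^{1/p} n^{-k_j/p}` equals `0`, then `t n = 0` for all `n ≥ 2`. -/
theorem stmt1 {𝕜 : Type} [RCLike 𝕜] (p : ℝ) (hp : 0 < p)
    (t : ℕ → 𝕜) (ht : ∃ C : ℝ, ∀ n, ‖t n‖ ≤ C)
    (k : ℕ → ℕ) (hk : StrictMono k) (hkpos : ∀ j, 0 < k j)
    (hk1 : 2 * p < (k 1 : ℝ))
    (hzero : ∀ j : ℕ, 1 ≤ j →
      ∑' n : {n : ℕ // 2 ≤ n},
        (((((n.1 : ℝ) - 1) / (n.1 : ℝ)) ^ (1 / p) * (n.1 : ℝ) ^ (-(k j : ℝ) / p) : ℝ)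
          • t n.1) = 0) :
    ∀ n : ℕ, 2 ≤ n → t n = 0 :=
  stmt1_general p hp t ht k hk hk1 hzero
end

section
/- For each p ∈ (0,∞] (with 𝕜 = ℝ or ℂ) there exists a linearly independent sequence (v_n)_{n≥2} of elements of ℓ_p ∩ c₀ with the following property: for every bounded scalar sequence (t_n)_{n≥2}, the series x(k) := ∑_{n=2}^∞ t_n v_n(k) converges absolutely for every k ∈ ℕ, the resulting sequence x lies in ℓ_p, d_p(∑_{n=2}^N t_n v_n, x) → 0 as N → ∞, x = 0 only if t_n = 0 for all n ≥ 2, and whenever x ≠ 0 the zero set {k : x(k) = 0} is finite. In particular, Z(ℓ_p) is [ℓ_∞]-lineable. -/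
open Filter
open scoped ENNReal

/-- Membership in `ℓ_p` for `p ∈ (0,∞]`: for `p = ∞` boundedness, for
`p < ∞` summability of `‖x n‖^p`. -/
def InLp {𝕜 : Type} [RCLike 𝕜] (p : ℝ≥0∞) (x : ℕ → 𝕜) : Prop :=
  if p = ⊤ then ∃ C : ℝ, ∀ n, ‖x n‖ ≤ C
  else Summable (fun n => ‖x n‖ ^ p.toReal)

/-- The `p`-distance on `ℓ_p`. -/
noncomputable def dp {𝕜 : Type} [RCLike 𝕜] (p : ℝ≥0∞) (x y : ℕ → 𝕜) : ℝ :=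
  if p = ⊤ then ⨆ n, ‖x n - y n‖
  else if p < 1 then ∑' n, ‖x n - y n‖ ^ p.toReal
  else (∑' n, ‖x n - y n‖ ^ p.toReal) ^ (1 / p.toReal)

/-- A set of sequences is closed in `ℓ_p` if it contains every `ℓ_p`-limit
(in the `p`-distance) of sequences of its elements. -/
def IsClosedInLp {𝕜 : Type} [RCLike 𝕜] (p : ℝ≥0∞) (F : Set (ℕ → 𝕜)) : Prop :=
  ∀ f : ℕ → (ℕ → 𝕜), (∀ j, f j ∈ F) → ∀ x : ℕ → 𝕜, InLp p x →
    Tendsto (fun j => dp p (f j) x) atTop (nhds 0) → x ∈ F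


/-! Take `v n k = r k ^ (n + 1)` with `r k = 2⁻¹ ^ (k + 1)`, so that `x k = f (r k)` for the power
series `f z = ∑ t n * z ^ (n + 1)`. Its coefficients are bounded, hence every estimate is geometric
in `k`. If `t m` is the first nonzero coefficient then `f z = t m * z ^ (m + 1) + O(‖z‖ ^ (m + 2))`,
so `f` does not vanish at `r k` for large `k`: the zero set of `x` is finite. In particular `x = 0`
forces `t = 0`, which also gives linear independence. -/

open Topology

section PowerSeries

variable {𝕜 : Type*} [NormedField 𝕜] {t : ℕ → 𝕜} {C : ℝ} {z : 𝕜}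

lemma norm_mul_pow_succ_le (ht : ∀ n, ‖t n‖ ≤ C) (hz : ‖z‖ ≤ 2⁻¹) (M n : ℕ) :
    ‖t (n + M) * z ^ (n + M + 1)‖ ≤ C * ‖z‖ ^ (M + 1) * 2⁻¹ ^ n := by
  have hC : 0 ≤ C := (norm_nonneg _).trans (ht 0)
  calc ‖t (n + M) * z ^ (n + M + 1)‖ = ‖t (n + M)‖ * (‖z‖ ^ (M + 1) * ‖z‖ ^ n) := by
        rw [norm_mul, norm_pow, ← pow_add]; ring_nf
    _ ≤ C * (‖z‖ ^ (M + 1) * 2⁻¹ ^ n) := by gcongr; exact ht _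
    _ = C * ‖z‖ ^ (M + 1) * 2⁻¹ ^ n := by ring

lemma norm_tsum_tail_le (ht : ∀ n, ‖t n‖ ≤ C) (hz : ‖z‖ ≤ 2⁻¹) (M : ℕ) :
    ‖∑' n, t (n + M) * z ^ (n + M + 1)‖ ≤ C * ‖z‖ ^ (M + 1) * 2 := by
  have hgeom : HasSum (fun n : ℕ => (2⁻¹ : ℝ) ^ n) 2 := by
    convert hasSum_geometric_of_lt_one (r := (2⁻¹ : ℝ)) (by norm_num) (by norm_num); norm_num
  exact tsum_of_norm_bounded (hgeom.mul_left _) (norm_mul_pow_succ_le ht hz M)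

lemma norm_tsum_mul_pow_succ_le (ht : ∀ n, ‖t n‖ ≤ C) (hz : ‖z‖ ≤ 2⁻¹) :
    ‖∑' n, t n * z ^ (n + 1)‖ ≤ C * ‖z‖ * 2 := by
  have h := norm_tsum_tail_le ht hz 0
  simp only [add_zero, zero_add, pow_one] at h
  exact h

variable [CompleteSpace 𝕜]

lemma summable_mul_pow_succ (ht : ∀ n, ‖t n‖ ≤ C) (hz : ‖z‖ ≤ 2⁻¹) :
    Summable fun n => t n * z ^ (n + 1) :=
  .of_norm_bounded ((summable_geometric_of_lt_one (by norm_num) (by norm_num)).mul_left _)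
    (norm_mul_pow_succ_le ht hz 0)

lemma norm_sum_range_sub_tsum_le (ht : ∀ n, ‖t n‖ ≤ C) (hz : ‖z‖ ≤ 2⁻¹) (N : ℕ) :
    ‖∑ n ∈ Finset.range N, t n * z ^ (n + 1) - ∑' n, t n * z ^ (n + 1)‖
      ≤ C * ‖z‖ ^ (N + 1) * 2 := by
  rw [norm_sub_rev, ← (summable_mul_pow_succ ht hz).sum_add_tsum_nat_add N, add_sub_cancel_left]
  exact norm_tsum_tail_le ht hz N

lemma norm_coeff_le_of_tsum_eq_zero (ht : ∀ n, ‖t n‖ ≤ C) (hz : ‖z‖ ≤ 2⁻¹) (hz0 : z ≠ 0)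
    {m : ℕ} (hm : ∀ j < m, t j = 0) (h0 : ∑' n, t n * z ^ (n + 1) = 0) :
    ‖t m‖ ≤ 2 * C * ‖z‖ := by
  have hlead : ∑ n ∈ Finset.range (m + 1), t n * z ^ (n + 1) = t m * z ^ (m + 1) := by
    rw [Finset.sum_range_succ, Finset.sum_eq_zero fun j hj => by
      rw [hm j (Finset.mem_range.1 hj), zero_mul], zero_add]
  have key := norm_sum_range_sub_tsum_le ht hz (m + 1)
  rw [hlead, h0, sub_zero, norm_mul, norm_pow] at key
  have hpos : 0 < ‖z‖ ^ (m + 1) := pow_pos (norm_pos_iff.2 hz0) _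
  exact le_of_mul_le_mul_right (key.trans_eq (by ring)) hpos

lemma finite_setOf_tsum_eq_zero {r : ℕ → 𝕜} (ht : ∀ n, ‖t n‖ ≤ C) (hr : ∀ k, ‖r k‖ ≤ 2⁻¹)
    (hr0 : ∀ k, r k ≠ 0) (hlim : Tendsto r atTop (𝓝 0)) (htne : t ≠ 0) :
    {k | ∑' n, t n * r k ^ (n + 1) = 0}.Finite := by
  classical
  have hex : ∃ m, t m ≠ 0 := Function.ne_iff.1 htne
  have hsmall : ∀ᶠ k in cofinite, 2 * C * ‖r k‖ < ‖t (Nat.find hex)‖ := by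
    rw [Nat.cofinite_eq_atTop]
    refine (tendsto_order.1 ?_).2 _ (norm_pos_iff.2 (Nat.find_spec hex))
    simpa using hlim.norm.const_mul (2 * C)
  refine (eventually_cofinite.1 hsmall).subset fun k hk => not_lt.2 ?_
  exact norm_coeff_le_of_tsum_eq_zero ht (hr k) (hr0 k)
    (fun j hj => not_not.1 (Nat.find_min hex hj)) hk

lemma eq_zero_of_tsum_eq_zero {r : ℕ → 𝕜} (ht : ∀ n, ‖t n‖ ≤ C) (hr : ∀ k, ‖r k‖ ≤ 2⁻¹)
    (hr0 : ∀ k, r k ≠ 0) (hlim : Tendsto r atTop (𝓝 0))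
    (h0 : ∀ k, ∑' n, t n * r k ^ (n + 1) = 0) : t = 0 := by
  by_contra htne
  exact Set.infinite_univ ((finite_setOf_tsum_eq_zero ht hr hr0 hlim htne).subset
    fun k _ => h0 k)

end PowerSeries

section GeometricDecay

variable {E : Type*} [SeminormedAddCommGroup E] {A ρ q : ℝ}

lemma rpow_norm_le_geometric {y : ℕ → E} (hρ : 0 ≤ ρ) (hq : 0 ≤ q)
    (hy : ∀ k, ‖y k‖ ≤ A * ρ ^ k) (k : ℕ) : ‖y k‖ ^ q ≤ A ^ q * (ρ ^ q) ^ k := by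
  have hA : 0 ≤ A := by simpa using (norm_nonneg _).trans (hy 0)
  calc ‖y k‖ ^ q ≤ (A * ρ ^ k) ^ q := Real.rpow_le_rpow (norm_nonneg _) (hy k) hq
    _ = A ^ q * (ρ ^ q) ^ k := by rw [Real.mul_rpow hA (by positivity), Real.rpow_pow_comm hρ]

lemma summable_rpow_norm_of_le_geometric {y : ℕ → E} (hρ0 : 0 ≤ ρ) (hρ1 : ρ < 1) (hq : 0 < q)
    (hy : ∀ k, ‖y k‖ ≤ A * ρ ^ k) : Summable fun k => ‖y k‖ ^ q :=
  .of_nonneg_of_le (fun _ => by positivity) (rpow_norm_le_geometric hρ0 hq.le hy)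
    ((summable_geometric_of_lt_one (by positivity) (Real.rpow_lt_one hρ0 hρ1 hq)).mul_left _)

lemma tsum_rpow_norm_le_of_le_geometric {y : ℕ → E} (hρ0 : 0 ≤ ρ) (hρ1 : ρ < 1) (hq : 0 < q)
    (hy : ∀ k, ‖y k‖ ≤ A * ρ ^ k) : ∑' k, ‖y k‖ ^ q ≤ A ^ q * (1 - ρ ^ q)⁻¹ :=
  hasSum_le (rpow_norm_le_geometric hρ0 hq.le hy)
    (summable_rpow_norm_of_le_geometric hρ0 hρ1 hq hy).hasSum
    ((hasSum_geometric_of_lt_one (by positivity) (Real.rpow_lt_one hρ0 hρ1 hq)).mul_left _)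

lemma tendsto_tsum_rpow_norm_of_le_geometric {f : ℕ → ℕ → E} {ε : ℕ → ℝ} (hρ0 : 0 ≤ ρ)
    (hρ1 : ρ < 1) (hq : 0 < q) (hε : Tendsto ε atTop (𝓝 0))
    (hf : ∀ N k, ‖f N k‖ ≤ ε N * ρ ^ k) :
    Tendsto (fun N => ∑' k, ‖f N k‖ ^ q) atTop (𝓝 0) := by
  have hbound : Tendsto (fun N => ε N ^ q * (1 - ρ ^ q)⁻¹) atTop (𝓝 0) := by
    simpa [Real.zero_rpow hq.ne'] using (hε.rpow_const (Or.inr hq.le)).mul_const _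
  exact squeeze_zero (fun N => tsum_nonneg fun k => by positivity)
    (fun N => tsum_rpow_norm_le_of_le_geometric hρ0 hρ1 hq (hf N)) hbound

lemma tendsto_zero_of_norm_le_geometric {y : ℕ → E} (hρ0 : 0 ≤ ρ) (hρ1 : ρ < 1)
    (hy : ∀ k, ‖y k‖ ≤ A * ρ ^ k) : Tendsto y atTop (𝓝 0) :=
  squeeze_zero_norm hy (by simpa using (tendsto_pow_atTop_nhds_zero_of_lt_one hρ0 hρ1).const_mul A)

end GeometricDecay

section SequenceSpaces

variable {𝕜 : Type} [RCLike 𝕜] {p : ℝ≥0∞} {A ρ : ℝ}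

lemma inLp_of_norm_le_geometric (hp : 0 < p) {x : ℕ → 𝕜} (hρ0 : 0 ≤ ρ) (hρ1 : ρ < 1)
    (hx : ∀ k, ‖x k‖ ≤ A * ρ ^ k) : InLp p x := by
  by_cases htop : p = ⊤
  · have hA : 0 ≤ A := by simpa using (norm_nonneg _).trans (hx 0)
    rw [InLp, if_pos htop]
    exact ⟨A, fun k => (hx k).trans (mul_le_of_le_one_right hA (pow_le_one₀ hρ0 hρ1.le))⟩
  · rw [InLp, if_neg htop]
    exact summable_rpow_norm_of_le_geometric hρ0 hρ1 (ENNReal.toReal_pos hp.ne' htop) hx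

lemma tendsto_dp_of_norm_sub_le_geometric (hp : 0 < p) {f : ℕ → ℕ → 𝕜} {x : ℕ → 𝕜}
    {ε : ℕ → ℝ} (hρ0 : 0 ≤ ρ) (hρ1 : ρ < 1) (hε : Tendsto ε atTop (𝓝 0))
    (hf : ∀ N k, ‖f N k - x k‖ ≤ ε N * ρ ^ k) :
    Tendsto (fun N => dp p (f N) x) atTop (𝓝 0) := by
  by_cases htop : p = ⊤
  · have hε0 (N : ℕ) : 0 ≤ ε N := by simpa using (norm_nonneg _).trans (hf N 0)
    simp only [dp, if_pos htop]
    refine squeeze_zero (fun N => Real.iSup_nonneg fun k => norm_nonneg _) (fun N => ?_) hε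
    exact ciSup_le fun k => (hf N k).trans (mul_le_of_le_one_right (hε0 N) (pow_le_one₀ hρ0 hρ1.le))
  have hq : 0 < p.toReal := ENNReal.toReal_pos hp.ne' htop
  have hsum := tendsto_tsum_rpow_norm_of_le_geometric hρ0 hρ1 hq hε hf
  by_cases hlt : p < 1
  · simpa only [dp, if_neg htop, if_pos hlt] using hsum
  · simp only [dp, if_neg htop, if_neg hlt]
    simpa [Real.zero_rpow (inv_pos.2 hq).ne'] using
      hsum.rpow_const (p := 1 / p.toReal) (Or.inr (by positivity))

end SequenceSpaces

def dyadicPoint (𝕜 : Type) [RCLike 𝕜] (k : ℕ) : 𝕜 := 2⁻¹ ^ (k + 1)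

section Dyadic

variable {𝕜 : Type} [RCLike 𝕜]

lemma norm_dyadicPoint (k : ℕ) : ‖dyadicPoint 𝕜 k‖ = 2⁻¹ * 2⁻¹ ^ k := by
  simp [dyadicPoint, pow_succ, mul_comm]

lemma norm_dyadicPoint_le (k : ℕ) : ‖dyadicPoint 𝕜 k‖ ≤ 2⁻¹ := by
  rw [norm_dyadicPoint]
  exact mul_le_of_le_one_right (by norm_num) (pow_le_one₀ (by norm_num) (by norm_num))

lemma dyadicPoint_ne_zero (k : ℕ) : dyadicPoint 𝕜 k ≠ 0 := by
  simp [dyadicPoint]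

lemma tendsto_dyadicPoint : Tendsto (dyadicPoint 𝕜) atTop (𝓝 0) :=
  tendsto_zero_of_norm_le_geometric (by norm_num) (by norm_num) fun k =>
    (norm_dyadicPoint (𝕜 := 𝕜) k).le

lemma norm_dyadicPoint_pow_le (n k : ℕ) : ‖dyadicPoint 𝕜 k ^ (n + 1)‖ ≤ 2⁻¹ * 2⁻¹ ^ k := by
  rw [norm_pow, ← norm_dyadicPoint (𝕜 := 𝕜)]
  exact pow_le_of_le_one (norm_nonneg _) ((norm_dyadicPoint_le k).trans (by norm_num))
    n.succ_ne_zero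

variable {t : ℕ → 𝕜} {C : ℝ}

lemma norm_tsum_dyadicPoint_le (ht : ∀ n, ‖t n‖ ≤ C) (k : ℕ) :
    ‖∑' n, t n * dyadicPoint 𝕜 k ^ (n + 1)‖ ≤ C * 2⁻¹ ^ k := by
  have h := norm_tsum_mul_pow_succ_le ht (norm_dyadicPoint_le k)
  rw [norm_dyadicPoint] at h
  linarith

lemma norm_sum_range_sub_tsum_dyadicPoint_le (ht : ∀ n, ‖t n‖ ≤ C) (N k : ℕ) :
    ‖∑ n ∈ Finset.range N, t n * dyadicPoint 𝕜 k ^ (n + 1) -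
        ∑' n, t n * dyadicPoint 𝕜 k ^ (n + 1)‖ ≤ C * 2⁻¹ ^ N * 2⁻¹ ^ k := by
  have hC : 0 ≤ C := (norm_nonneg _).trans (ht 0)
  have hpow : ‖dyadicPoint 𝕜 k‖ ^ (N + 1) ≤ 2⁻¹ ^ N * (2⁻¹ * 2⁻¹ ^ k) := by
    rw [pow_succ]
    exact mul_le_mul (pow_le_pow_left₀ (norm_nonneg _) (norm_dyadicPoint_le k) N)
      (norm_dyadicPoint k).le (norm_nonneg _) (by positivity)
  calc _ ≤ C * ‖dyadicPoint 𝕜 k‖ ^ (N + 1) * 2 :=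
        norm_sum_range_sub_tsum_le ht (norm_dyadicPoint_le k) N
    _ ≤ C * (2⁻¹ ^ N * (2⁻¹ * 2⁻¹ ^ k)) * 2 := by gcongr
    _ = C * 2⁻¹ ^ N * 2⁻¹ ^ k := by ring

lemma linearIndependent_dyadicPoint_pow :
    LinearIndependent 𝕜 fun n k => dyadicPoint 𝕜 k ^ (n + 1) := by
  classical
  rw [linearIndependent_iff]
  intro l hl
  obtain ⟨C, hC⟩ := (l.finite_range.image norm).bddAbove
  refine DFunLike.coe_injective (eq_zero_of_tsum_eq_zero (C := C)
    (fun n => hC ⟨l n, Set.mem_range_self n, rfl⟩) norm_dyadicPoint_le dyadicPoint_ne_zero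
    tendsto_dyadicPoint fun k => ?_)
  have hk := congrFun hl k
  rw [tsum_eq_sum (s := l.support) fun n hn => by simp [Finsupp.notMem_support_iff.1 hn]]
  simpa [Finsupp.linearCombination_apply, Finsupp.sum] using hk

end Dyadic

/-- For each `p ∈ (0,∞]` there exists a linearly independent
sequence `(v n)` of elements of `ℓ_p ∩ c₀` such that for every bounded scalar
sequence `t`, the series `x k = ∑' n, t n * v n k` converges absolutely for
every `k`, `x ∈ ℓ_p`, the partial sums converge to `x` in the `p`-distance,
`x = 0` only if `t = 0`, and whenever `x ≠ 0` its zero set is finite.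
In particular, `Z(ℓ_p)` is `[ℓ_∞]`-lineable. -/
theorem stmt3 {𝕜 : Type} [RCLike 𝕜] (p : ℝ≥0∞) (hp : 0 < p) :
    ∃ v : ℕ → (ℕ → 𝕜),
      LinearIndependent 𝕜 v ∧
      (∀ n, InLp p (v n) ∧ Tendsto (v n) atTop (nhds 0)) ∧
      ∀ t : ℕ → 𝕜, (∃ C : ℝ, ∀ n, ‖t n‖ ≤ C) →
        (∀ k : ℕ, Summable (fun n => ‖t n * v n k‖)) ∧
        InLp p (fun k => ∑' n, t n * v n k) ∧
        Tendsto (fun N => dp p (fun k => ∑ n ∈ Finset.range N, t n * v n k)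
          (fun k => ∑' n, t n * v n k)) atTop (nhds 0) ∧
        ((fun k => ∑' n, t n * v n k) = 0 → ∀ n, t n = 0) ∧
        ((fun k => ∑' n, t n * v n k) ≠ 0 →
          {k : ℕ | (∑' n, t n * v n k) = 0}.Finite) := by
  refine ⟨fun n k => dyadicPoint 𝕜 k ^ (n + 1), linearIndependent_dyadicPoint_pow,
    fun n => ⟨inLp_of_norm_le_geometric hp (by norm_num) (by norm_num) (norm_dyadicPoint_pow_le n),
      tendsto_zero_of_norm_le_geometric (by norm_num) (by norm_num)
        (norm_dyadicPoint_pow_le n)⟩, ?_⟩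
  rintro t ⟨C, ht⟩
  refine ⟨fun k => (summable_mul_pow_succ ht (norm_dyadicPoint_le k)).norm,
    inLp_of_norm_le_geometric hp (by norm_num) (by norm_num) (norm_tsum_dyadicPoint_le ht),
    tendsto_dp_of_norm_sub_le_geometric hp (by norm_num) (by norm_num) ?_
      (norm_sum_range_sub_tsum_dyadicPoint_le ht),
    fun h0 => congrFun (eq_zero_of_tsum_eq_zero ht norm_dyadicPoint_le dyadicPoint_ne_zero
      tendsto_dyadicPoint (congrFun h0)), fun hne => ?_⟩
  · simpa using (tendsto_pow_atTop_nhds_zero_of_lt_one (r := (2⁻¹ : ℝ)) (by norm_num)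
      (by norm_num)).const_mul C
  · exact finite_setOf_tsum_eq_zero ht norm_dyadicPoint_le dyadicPoint_ne_zero
      tendsto_dyadicPoint fun h => hne (funext fun k => by simp [h])
end

section
/- For each p ∈ (0,∞] (with 𝕜 = ℝ or ℂ) there exists a 𝕜-subspace V of the sequence space 𝕜^ℕ with V ⊆ ℓ_p, dim V = 𝔠, and such that every nonzero x ∈ V has only finitely many zero coordinates, i.e. V \ {0} ⊆ Z(ℓ_p). In particular, Z(ℓ_p) is maximal lineable. -/
open Filter
open scoped ENNReal

/-!
The geometric sequences `n ↦ t ^ n`, `0 < t < 1`, span the required subspace. They lie in every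
`ℓ_p`, and a nontrivial combination `∑ cᵢ tᵢ ^ n` of distinct ratios is eventually nonzero:
divided by `T ^ n`, where `T` is the largest ratio, it tends to the coefficient of `T`.
This gives linear independence, hence dimension `#(0,1) = 𝔠`, and finiteness of the zero sets.
-/

open Topology

theorem inLp_iff_memℓp {𝕜 : Type} [RCLike 𝕜] {p : ℝ≥0∞} (hp : p ≠ 0) {x : ℕ → 𝕜} :
    InLp p x ↔ Memℓp x p := by
  by_cases htop : p = ⊤
  · simp [InLp, htop, memℓp_infty_iff, bddAbove_def]
  · rw [InLp, if_neg htop, memℓp_gen_iff (ENNReal.toReal_pos hp htop)]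

theorem memℓp_pow_of_norm_lt_one {𝕜 : Type*} [NormedField 𝕜] {p : ℝ≥0∞} (hp : p ≠ 0)
    {z : 𝕜} (hz : ‖z‖ < 1) : Memℓp (fun n : ℕ => z ^ n) p := by
  by_cases htop : p = ⊤
  · subst htop
    refine memℓp_infty ⟨1, ?_⟩
    rintro _ ⟨n, rfl⟩
    simpa [norm_pow] using pow_le_one₀ (norm_nonneg z) hz.le
  · have hq := ENNReal.toReal_pos hp htop
    refine memℓp_gen ?_
    have hgeom := summable_geometric_of_lt_one (Real.rpow_nonneg (norm_nonneg z) p.toReal)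
      (Real.rpow_lt_one (norm_nonneg z) hz hq)
    convert hgeom using 2 with n
    rw [norm_pow, ← Real.rpow_natCast, ← Real.rpow_natCast, ← Real.rpow_mul (norm_nonneg z),
      ← Real.rpow_mul (norm_nonneg z), mul_comm]

theorem memℓp_of_mem_span {𝕜 α : Type*} {E : α → Type*} [NormedField 𝕜]
    [∀ i, NormedAddCommGroup (E i)] [∀ i, NormedSpace 𝕜 (E i)] {p : ℝ≥0∞}
    {s : Set (∀ i, E i)} (hs : ∀ f ∈ s, Memℓp f p) {f : ∀ i, E i}
    (hf : f ∈ Submodule.span 𝕜 s) : Memℓp f p := by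
  induction hf using Submodule.span_induction with
  | mem g hg => exact hs g hg
  | zero => exact zero_memℓp
  | add g h _ _ hg hh => exact hg.add hh
  | smul a g _ hg => exact hg.const_smul a

section GeometricCombination

variable {𝕜 ι : Type*} [RCLike 𝕜]

theorem eventually_sum_mul_ofReal_pow_ne_zero {s : Finset ι} (hs : s.Nonempty) {r : ι → ℝ}
    (hr : Set.InjOn r s) (hpos : ∀ i ∈ s, 0 < r i) {c : ι → 𝕜} (hc : ∀ i ∈ s, c i ≠ 0) :
    ∀ᶠ n in atTop, ∑ i ∈ s, c i * (r i : 𝕜) ^ n ≠ 0 := by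
  classical
  obtain ⟨j, hj, hmax⟩ := s.exists_max_image r hs
  have hrj : 0 < r j := hpos j hj
  have hrj' : (r j : 𝕜) ≠ 0 := RCLike.ofReal_ne_zero.2 hrj.ne'
  have hlim : Tendsto (fun n => ∑ i ∈ s, c i * ((r i / r j : ℝ) : 𝕜) ^ n) atTop
      (𝓝 (∑ i ∈ s, if i = j then c i else 0)) := by
    refine tendsto_finsetSum _ fun i hi => ?_
    split_ifs with hij
    · subst hij
      simp [div_self hrj.ne']
    · have hlt : r i < r j := (hmax i hi).lt_of_ne fun h => hij (hr hi hj h)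
      have hratio : ‖((r i / r j : ℝ) : 𝕜)‖ < 1 := by
        rw [RCLike.norm_ofReal, abs_of_pos (div_pos (hpos i hi) hrj)]
        exact (div_lt_one hrj).2 hlt
      simpa using (tendsto_pow_atTop_nhds_zero_of_norm_lt_one hratio).const_mul (c i)
  rw [Finset.sum_ite_eq' s j c, if_pos hj] at hlim
  filter_upwards [hlim.eventually_ne (hc j hj)] with n hn
  have hfactor : ∑ i ∈ s, c i * (r i : 𝕜) ^ n
      = (r j : 𝕜) ^ n * ∑ i ∈ s, c i * ((r i / r j : ℝ) : 𝕜) ^ n := by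
    rw [Finset.mul_sum]
    refine Finset.sum_congr rfl fun i _ => ?_
    rw [RCLike.ofReal_div, div_pow]
    field_simp
  rw [hfactor]
  exact mul_ne_zero (pow_ne_zero _ hrj') hn

theorem eventually_linearCombination_ofReal_pow_ne_zero {r : ι → ℝ} (hr : Function.Injective r)
    (hpos : ∀ i, 0 < r i) {c : ι →₀ 𝕜} (hc : c ≠ 0) :
    ∀ᶠ n in atTop, Finsupp.linearCombination 𝕜 (fun i n => (r i : 𝕜) ^ n) c n ≠ 0 := by
  simp only [Finsupp.linearCombination_apply, Finsupp.sum, Finset.sum_apply, Pi.smul_apply,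
    smul_eq_mul]
  exact eventually_sum_mul_ofReal_pow_ne_zero (Finsupp.support_nonempty_iff.2 hc) hr.injOn
    (fun i _ => hpos i) fun i => Finsupp.mem_support_iff.1

theorem linearIndependent_ofReal_pow {r : ι → ℝ} (hr : Function.Injective r) (hpos : ∀ i, 0 < r i) :
    LinearIndependent 𝕜 (fun i n => (r i : 𝕜) ^ n) := by
  rw [linearIndependent_iff]
  intro c hc
  by_contra hne
  obtain ⟨n, hn⟩ := (eventually_linearCombination_ofReal_pow_ne_zero hr hpos hne).exists
  exact hn (congrFun hc n)

theorem finite_zeros_of_mem_span_ofReal_pow {r : ι → ℝ} (hr : Function.Injective r)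
    (hpos : ∀ i, 0 < r i) {x : ℕ → 𝕜}
    (hx : x ∈ Submodule.span 𝕜 (Set.range fun i n => (r i : 𝕜) ^ n)) (hx0 : x ≠ 0) :
    {n | x n = 0}.Finite := by
  rw [← Finsupp.range_linearCombination] at hx
  obtain ⟨c, rfl⟩ := hx
  have hc : c ≠ 0 := by
    rintro rfl
    exact hx0 (map_zero _)
  have hev := eventually_linearCombination_ofReal_pow_ne_zero hr hpos hc
  rw [← Nat.cofinite_eq_atTop, eventually_cofinite] at hev
  simpa using hev

end GeometricCombination

/-- For each `p ∈ (0,∞]` there exists a `𝕜`-subspace `V` of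
`𝕜^ℕ` contained in `ℓ_p`, of dimension `𝔠`, all of whose nonzero elements
have only finitely many zero coordinates.  In particular `Z(ℓ_p)` is maximal
lineable. -/
theorem stmt4 {𝕜 : Type} [RCLike 𝕜] (p : ℝ≥0∞) (hp : 0 < p) :
    ∃ V : Submodule 𝕜 (ℕ → 𝕜),
      (↑V : Set (ℕ → 𝕜)) ⊆ {x | InLp p x} ∧
      Module.rank 𝕜 ↥V = Cardinal.continuum ∧
      ∀ x ∈ V, x ≠ 0 → {n : ℕ | x n = 0}.Finite := by
  have hpos : ∀ t : Set.Ioo (0 : ℝ) 1, 0 < (t : ℝ) := fun t => t.2.1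
  have hind := linearIndependent_ofReal_pow (𝕜 := 𝕜) Subtype.val_injective hpos
  refine ⟨Submodule.span 𝕜 (Set.range fun (t : Set.Ioo (0 : ℝ) 1) n => ((t : ℝ) : 𝕜) ^ n),
    ?_, ?_, ?_⟩
  · intro x hx
    refine (inLp_iff_memℓp hp.ne').2 (memℓp_of_mem_span ?_ hx)
    rintro _ ⟨t, rfl⟩
    refine memℓp_pow_of_norm_lt_one hp.ne' ?_
    rw [RCLike.norm_ofReal, abs_of_pos (hpos t)]
    exact t.2.2
  · rw [rank_span hind, Cardinal.mk_range_eq _ hind.injective]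
    exact Cardinal.mk_Ioo_real one_pos
  · exact fun x hx hx0 => finite_zeros_of_mem_span_ofReal_pow Subtype.val_injective hpos hx hx0
end

section
/- Let p ∈ (0,∞] (with 𝕜 = ℝ or ℂ) and let F be a closed 𝕜-subspace of ℓ_p with c₀ ⊆ F. Then Z(F) is lineable: there exists an infinite-dimensional 𝕜-subspace V ⊆ F such that every nonzero x ∈ V has only finitely many zero coordinates. -/
open Filter
open scoped ENNReal

/-- The geometric sequences used to build the lineable subspace. -/
noncomputable def geomSeq (𝕜 : Type) [RCLike 𝕜] (k : ℕ) : ℕ → 𝕜 :=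
  fun n => ((((k : ℝ) + 2)⁻¹ : ℝ) : 𝕜) ^ n

/-- Key lemma: a nonzero finite linear combination of the geometric sequences
is eventually nonzero. -/
lemma geomSeq_comb_eventually_ne {𝕜 : Type} [RCLike 𝕜] (c : ℕ →₀ 𝕜) (hc : c ≠ 0) :
    ∀ᶠ n in atTop, (c.sum fun k a => a • geomSeq 𝕜 k) n ≠ 0 := by
  have hs : c.support.Nonempty := Finsupp.support_nonempty_iff.mpr hc
  set k₀ := c.support.min' hs with hk₀
  have hk₀mem : k₀ ∈ c.support := c.support.min'_mem hs
  have hck₀ : c k₀ ≠ 0 := Finsupp.mem_support_iff.mp hk₀mem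
  -- the renormalized combination
  set g : ℕ → 𝕜 := fun n => ∑ k ∈ c.support,
    c k * ((((k₀ : ℝ) + 2) / ((k : ℝ) + 2) : ℝ) : 𝕜) ^ n with hg
  have hx : ∀ n, (c.sum fun k a => a • geomSeq 𝕜 k) n
      = g n * ((((k₀ : ℝ) + 2)⁻¹ : ℝ) : 𝕜) ^ n := by
    intro n
    simp only [Finsupp.sum, Finset.sum_apply, hg, Finset.sum_mul]
    refine Finset.sum_congr rfl fun k _ => ?_
    have hne : ((k : ℝ) + 2) ≠ 0 := by positivity
    have hne0 : ((k₀ : ℝ) + 2) ≠ 0 := by positivity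
    have : (((k₀ : ℝ) + 2) / ((k : ℝ) + 2)) * ((k₀ : ℝ) + 2)⁻¹ = ((k : ℝ) + 2)⁻¹ := by
      field_simp
    calc c k • geomSeq 𝕜 k n
        = c k * (((((k₀:ℝ)+2)/((k:ℝ)+2)) * ((k₀:ℝ)+2)⁻¹ : ℝ) : 𝕜) ^ n := by
          rw [this]; rfl
      _ = c k * ((((k₀:ℝ)+2)/((k:ℝ)+2) : ℝ) : 𝕜) ^ n * ((((k₀:ℝ)+2)⁻¹ : ℝ) : 𝕜) ^ n := by
          rw [RCLike.ofReal_mul, mul_pow, mul_assoc]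
  -- g tends to c k₀ ≠ 0
  have hlim : Tendsto g atTop (nhds (c k₀)) := by
    have : Tendsto g atTop (nhds (∑ k ∈ c.support,
        if k = k₀ then c k₀ else 0)) := by
      refine tendsto_finset_sum _ fun k hk => ?_
      by_cases hkk : k = k₀
      · have h1 : ((k₀ : ℝ) + 2) / ((k₀ : ℝ) + 2) = 1 := div_self (by positivity)
        simp [hkk, h1]
      · have hlt : k₀ < k := lt_of_le_of_ne (c.support.min'_le k hk) (Ne.symm hkk)
        have hnorm : ‖((((k₀ : ℝ) + 2) / ((k : ℝ) + 2) : ℝ) : 𝕜)‖ < 1 := by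
          rw [RCLike.norm_ofReal]
          rw [abs_div]
          rw [abs_of_pos (by positivity), abs_of_pos (by positivity)]
          rw [div_lt_one (by positivity)]
          have : (k₀ : ℝ) < k := by exact_mod_cast hlt
          linarith
        have h0 : Tendsto (fun n => ((((k₀ : ℝ) + 2) / ((k : ℝ) + 2) : ℝ) : 𝕜) ^ n)
            atTop (nhds 0) := tendsto_pow_atTop_nhds_zero_of_norm_lt_one hnorm
        simpa [hkk] using h0.const_mul (c k)
    simpa [Finset.sum_ite_eq' c.support k₀ (fun _ => c k₀), hk₀mem] using this
  have hev : ∀ᶠ n in atTop, g n ≠ 0 := hlim.eventually_ne hck₀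
  filter_upwards [hev] with n hgn
  rw [hx n]
  refine mul_ne_zero hgn (pow_ne_zero _ ?_)
  simp only [ne_eq, RCLike.ofReal_eq_zero]
  positivity

/-- Let `p ∈ (0,∞]` and let `F` be a closed `𝕜`-subspace of
`ℓ_p` containing `c₀`.  Then `Z(F)` is lineable: there is an
infinite-dimensional subspace `V ⊆ F` every nonzero element of which has only
finitely many zero coordinates. -/
theorem stmt5 {𝕜 : Type} [RCLike 𝕜] (p : ℝ≥0∞) (hp : 0 < p)
    (F : Submodule 𝕜 (ℕ → 𝕜))
    (hFp : (↑F : Set (ℕ → 𝕜)) ⊆ {x | InLp p x})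
    (hFc : IsClosedInLp p (↑F : Set (ℕ → 𝕜)))
    (hc0 : ∀ x : ℕ → 𝕜, Tendsto x atTop (nhds 0) → x ∈ F) :
    ∃ V : Submodule 𝕜 (ℕ → 𝕜), V ≤ F ∧
      Cardinal.aleph0 ≤ Module.rank 𝕜 ↥V ∧
      ∀ x ∈ V, x ≠ 0 → {n : ℕ | x n = 0}.Finite := by
  refine ⟨Submodule.span 𝕜 (Set.range (geomSeq 𝕜)), ?_, ?_, ?_⟩
  · rw [Submodule.span_le]
    rintro _ ⟨k, rfl⟩
    refine hc0 _ ?_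
    have : ‖((((k : ℝ) + 2)⁻¹ : ℝ) : 𝕜)‖ < 1 := by
      rw [RCLike.norm_ofReal, abs_of_pos (by positivity), inv_lt_one_iff₀]
      right; linarith [Nat.cast_nonneg (α := ℝ) k]
    exact tendsto_pow_atTop_nhds_zero_of_norm_lt_one this
  · -- linear independence
    have hli : LinearIndependent 𝕜 (geomSeq 𝕜) := by
      rw [linearIndependent_iff]
      intro l hl
      by_contra hl0
      have hev := geomSeq_comb_eventually_ne l hl0
      have : (l.sum fun k a => a • geomSeq 𝕜 k) = 0 := by
        simpa [Finsupp.linearCombination_apply] using hl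
      rw [this] at hev
      obtain ⟨n, hn⟩ := hev.exists
      exact hn rfl
    have hli' : LinearIndependent 𝕜 fun k =>
        (⟨geomSeq 𝕜 k, Submodule.subset_span ⟨k, rfl⟩⟩ :
          ↥(Submodule.span 𝕜 (Set.range (geomSeq 𝕜)))) := by
      refine hli.of_comp (Submodule.span 𝕜 (Set.range (geomSeq 𝕜))).subtype
    exact hli'.aleph0_le_rank
  · intro x hx hx0
    rw [Finsupp.mem_span_range_iff_exists_finsupp] at hx
    obtain ⟨c, rfl⟩ := hx
    have hc : c ≠ 0 := by
      rintro rfl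
      simp at hx0
    have hev := geomSeq_comb_eventually_ne c hc
    rw [eventually_atTop] at hev
    obtain ⟨N, hN⟩ := hev
    refine Set.Finite.subset (Set.finite_Iio N) fun n hn => ?_
    by_contra h
    exact hN n (le_of_not_gt h) hn
end

section
/- Let p ∈ (0,∞] (with 𝕜 = ℝ or ℂ) and let x ∈ ℓ_p be a sequence with only finitely many zero coordinates. Then there exists a 𝕜-subspace Y with x ∈ Y ⊆ ℓ_p, dim Y = 𝔠, and every nonzero y ∈ Y has only finitely many zero coordinates. In particular, Z(ℓ_p) is maximal pointwise lineable. -/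
open Filter
open scoped ENNReal

/-!
Take `Y` spanned by the sequences `n ↦ x n * t ^ n`, `t ∈ (0,1]`. For `t ≤ 1` these are dominated
by `|x|`, so finite combinations stay in `ℓ_p`. In a nonzero combination `∑ cₜ tⁿ` the term with
the largest `t` dominates as `n → ∞`, so the combination `x n * ∑ cₜ tⁿ` vanishes only where `x`
does or for finitely many `n`. Since `x` has infinitely many nonzero coordinates, this also makes
the family linearly independent, so `dim Y = #(0,1] = 𝔠`.
-/

theorem InLp.of_norm_le_mul {𝕜 : Type} [RCLike 𝕜] {p : ℝ≥0∞} {x y : ℕ → 𝕜} (hx : InLp p x)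
    {C : ℝ} (hC : 0 ≤ C) (hyx : ∀ n, ‖y n‖ ≤ C * ‖x n‖) : InLp p y := by
  unfold InLp at hx ⊢
  split_ifs at hx ⊢ with hp
  · obtain ⟨B, hB⟩ := hx
    exact ⟨C * B, fun n => (hyx n).trans (mul_le_mul_of_nonneg_left (hB n) hC)⟩
  · refine .of_nonneg_of_le (fun n => by positivity) (fun n => ?_) (hx.mul_left (C ^ p.toReal))
    calc ‖y n‖ ^ p.toReal ≤ (C * ‖x n‖) ^ p.toReal := by gcongr; exact hyx n
      _ = C ^ p.toReal * ‖x n‖ ^ p.toReal := Real.mul_rpow hC (norm_nonneg _)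

section PowerSums

variable {𝕜 : Type} [RCLike 𝕜] {ι : Type*}

theorem eventually_finsupp_sum_mul_pow_ne_zero {r : ι → ℝ} (hr : Function.Injective r)
    (hr₀ : ∀ i, 0 < r i) {c : ι →₀ 𝕜} (hc : c ≠ 0) :
    ∀ᶠ n in atTop, c.sum (fun i a => a * (r i : 𝕜) ^ n) ≠ 0 := by
  classical
  obtain ⟨i₀, hi₀, hmax⟩ :=
    c.support.exists_max_image r (Finsupp.support_nonempty_iff.mpr hc)
  -- Divided by `r i₀ ^ n`, the sum tends to its leading coefficient `c i₀ ≠ 0`.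
  have hlim : Tendsto (fun n => ∑ i ∈ c.support, c i * ((r i / r i₀ : ℝ) : 𝕜) ^ n) atTop
      (nhds (∑ i ∈ c.support, if i = i₀ then c i else 0)) := by
    refine tendsto_finsetSum _ fun i hi => ?_
    split_ifs with h
    · subst h
      simp [div_self (hr₀ i).ne']
    · have hlt : r i < r i₀ := (hmax i hi).lt_of_ne (hr.ne h)
      have hnorm : ‖((r i / r i₀ : ℝ) : 𝕜)‖ < 1 := by
        rw [RCLike.norm_ofReal, abs_of_pos (div_pos (hr₀ i) (hr₀ i₀))]
        exact (div_lt_one (hr₀ i₀)).mpr hlt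
      simpa using (tendsto_pow_atTop_nhds_zero_of_norm_lt_one hnorm).const_mul (c i)
  rw [Finset.sum_ite_eq' c.support i₀, if_pos hi₀] at hlim
  filter_upwards [hlim.eventually_ne (Finsupp.mem_support_iff.mp hi₀)] with n hn hsum
  refine hn ?_
  have hscale : ∑ i ∈ c.support, c i * ((r i / r i₀ : ℝ) : 𝕜) ^ n
      = ((r i₀ : 𝕜) ^ n)⁻¹ * c.sum (fun i a => a * (r i : 𝕜) ^ n) := by
    rw [Finsupp.sum, Finset.mul_sum]
    refine Finset.sum_congr rfl fun i _ => ?_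
    push_cast
    rw [div_pow]
    ring
  rw [hscale, hsum, mul_zero]

variable (x : ℕ → 𝕜) (r : ι → ℝ)

def powerWeighted (i : ι) (n : ℕ) : 𝕜 := x n * (r i : 𝕜) ^ n

variable {x r}

theorem linearCombination_powerWeighted_apply (c : ι →₀ 𝕜) (n : ℕ) :
    Finsupp.linearCombination 𝕜 (powerWeighted x r) c n
      = x n * c.sum (fun i a => a * (r i : 𝕜) ^ n) := by
  simp only [Finsupp.linearCombination_apply, Finsupp.sum, Finset.sum_apply, Pi.smul_apply,
    smul_eq_mul, powerWeighted, Finset.mul_sum]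
  exact Finset.sum_congr rfl fun i _ => by ring

theorem finite_zeros_linearCombination_powerWeighted (hxz : {n : ℕ | x n = 0}.Finite)
    (hr : Function.Injective r) (hr₀ : ∀ i, 0 < r i) {c : ι →₀ 𝕜} (hc : c ≠ 0) :
    {n | Finsupp.linearCombination 𝕜 (powerWeighted x r) c n = 0}.Finite := by
  obtain ⟨N, hN⟩ := eventually_atTop.mp (eventually_finsupp_sum_mul_pow_ne_zero hr hr₀ hc)
  refine (hxz.union (Set.finite_Iio N)).subset fun n hn => ?_
  rw [Set.mem_ofPred_eq, linearCombination_powerWeighted_apply, mul_eq_zero] at hn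
  refine hn.imp id fun hsum => ?_
  by_contra hNn
  exact hN n (not_lt.mp hNn) hsum

theorem linearIndependent_powerWeighted (hxz : {n : ℕ | x n = 0}.Finite)
    (hr : Function.Injective r) (hr₀ : ∀ i, 0 < r i) :
    LinearIndependent 𝕜 (powerWeighted x r) := by
  refine linearIndependent_iff.mpr fun c hc0 => ?_
  by_contra hc
  refine Set.infinite_univ (α := ℕ) ?_
  simpa [hc0] using finite_zeros_linearCombination_powerWeighted hxz hr hr₀ hc

theorem InLp.linearCombination_powerWeighted {p : ℝ≥0∞} (hx : InLp p x)
    (hr : ∀ i, |r i| ≤ 1) (c : ι →₀ 𝕜) :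
    InLp p (Finsupp.linearCombination 𝕜 (powerWeighted x r) c) := by
  refine hx.of_norm_le_mul (C := ∑ i ∈ c.support, ‖c i‖) (by positivity) fun n => ?_
  rw [linearCombination_powerWeighted_apply, norm_mul, mul_comm]
  gcongr
  calc ‖c.sum (fun i a => a * (r i : 𝕜) ^ n)‖ ≤ ∑ i ∈ c.support, ‖c i * (r i : 𝕜) ^ n‖ :=
        norm_sum_le _ _
    _ ≤ ∑ i ∈ c.support, ‖c i‖ := by
        gcongr with i
        rw [norm_mul, norm_pow, RCLike.norm_ofReal]
        exact mul_le_of_le_one_right (norm_nonneg _) (pow_le_one₀ (abs_nonneg _) (hr i))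

end PowerSums

theorem stmt6_general {𝕜 : Type} [RCLike 𝕜] (p : ℝ≥0∞)
    (x : ℕ → 𝕜) (hx : InLp p x) (hxz : {n : ℕ | x n = 0}.Finite) :
    ∃ Y : Submodule 𝕜 (ℕ → 𝕜), x ∈ Y ∧
      (↑Y : Set (ℕ → 𝕜)) ⊆ {y | InLp p y} ∧
      Module.rank 𝕜 ↥Y = Cardinal.continuum ∧
      ∀ y ∈ Y, y ≠ 0 → {n : ℕ | y n = 0}.Finite := by
  set v := powerWeighted x ((↑) : Set.Ioc (0 : ℝ) 1 → ℝ)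
  have hr₀ : ∀ t : Set.Ioc (0 : ℝ) 1, 0 < (t : ℝ) := fun t => t.2.1
  have hv : LinearIndependent 𝕜 v := linearIndependent_powerWeighted hxz Subtype.val_injective hr₀
  refine ⟨LinearMap.range (Finsupp.linearCombination 𝕜 v), ?_, ?_, ?_, ?_⟩
  · refine ⟨Finsupp.single ⟨1, by simp⟩ 1, funext fun n => ?_⟩
    simp [v, powerWeighted]
  · rintro _ ⟨c, rfl⟩
    exact hx.linearCombination_powerWeighted (fun t => (abs_of_pos (hr₀ t)).trans_le t.2.2) c
  · rw [Finsupp.range_linearCombination, rank_span hv, Cardinal.mk_range_eq v hv.injective,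
      Cardinal.mk_Ioc_real one_pos]
  · rintro _ ⟨c, rfl⟩ hy0
    exact finite_zeros_linearCombination_powerWeighted hxz Subtype.val_injective hr₀
      (by rintro rfl; exact hy0 (map_zero _))

/-- Let `p ∈ (0,∞]` and let `x ∈ ℓ_p` have only finitely
many zero coordinates.  Then there is a subspace `Y` with `x ∈ Y ⊆ ℓ_p`,
`dim Y = 𝔠`, and every nonzero `y ∈ Y` has only finitely many zero
coordinates.  In particular `Z(ℓ_p)` is maximal pointwise lineable. -/
theorem stmt6 {𝕜 : Type} [RCLike 𝕜] (p : ℝ≥0∞) (hp : 0 < p)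
    (x : ℕ → 𝕜) (hx : InLp p x) (hxz : {n : ℕ | x n = 0}.Finite) :
    ∃ Y : Submodule 𝕜 (ℕ → 𝕜), x ∈ Y ∧
      (↑Y : Set (ℕ → 𝕜)) ⊆ {y | InLp p y} ∧
      Module.rank 𝕜 ↥Y = Cardinal.continuum ∧
      ∀ y ∈ Y, y ≠ 0 → {n : ℕ | y n = 0}.Finite :=
  stmt6_general p x hx hxz
end

section
/- Let 𝕜 be ℝ or ℂ and let x ∈ c₀ be a sequence with only finitely many zero coordinates. Then there exists a 𝕜-subspace Y with x ∈ Y ⊆ c₀, dim Y = 𝔠, and every nonzero y ∈ Y has only finitely many zero coordinates. In particular, Z(c₀) is maximal pointwise lineable. -/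
set_option linter.unnecessarySimpa false

open Filter

section Aux
variable {𝕜 : Type} [RCLike 𝕜]

private noncomputable def stmt7g (c : ↥(Set.Ioc (0:ℝ) 1) →₀ 𝕜) (n : ℕ) : 𝕜 :=
  c.sum fun t a => a * ((t : ℝ) : 𝕜) ^ n

private lemma stmt7g_ne (c : ↥(Set.Ioc (0:ℝ) 1) →₀ 𝕜) (hc : c ≠ 0) :
    ∀ᶠ n in atTop, stmt7g c n ≠ 0 := by
  have hne : c.support.Nonempty := Finsupp.support_nonempty_iff.mpr hc
  obtain ⟨u, hu, hmax⟩ := c.support.exists_max_image (fun t => (t : ℝ)) hne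
  have hu0 : (0:ℝ) < (u:ℝ) := u.2.1
  set h : ℕ → 𝕜 := fun n => ∑ t ∈ c.support, c t * ((((t:ℝ)/(u:ℝ)) : ℝ) : 𝕜) ^ n with hh
  have hlim : Tendsto h atTop (nhds (c u)) := by
    have : Tendsto h atTop
        (nhds (∑ t ∈ c.support, if t = u then c u else 0)) := by
      apply tendsto_finset_sum
      intro t ht
      by_cases htu : t = u
      · subst htu
        simp only [if_pos rfl, div_self hu0.ne']
        simpa using tendsto_const_nhds (x := c t)
      · simp only [if_neg htu]
        have h1 : (t:ℝ)/(u:ℝ) < 1 := by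
          rw [div_lt_one hu0]
          exact lt_of_le_of_ne (hmax t ht) (fun he => htu (Subtype.ext he))
        have h0 : (0:ℝ) ≤ (t:ℝ)/(u:ℝ) := div_nonneg t.2.1.le hu0.le
        have : Tendsto (fun n => ((t:ℝ)/(u:ℝ)) ^ n) atTop (nhds 0) :=
          tendsto_pow_atTop_nhds_zero_of_lt_one h0 h1
        have := ((RCLike.continuous_ofReal (K := 𝕜)).tendsto 0).comp this
        simpa using this.const_mul (c t)
    simpa [Finset.sum_ite_eq' c.support u (fun _ => c u), hu] using this
  have hcu : c u ≠ 0 := Finsupp.mem_support_iff.mp hu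
  filter_upwards [hlim.eventually_ne hcu] with n hn
  have hgn : stmt7g c n = ((u:ℝ):𝕜) ^ n * h n := by
    rw [hh, Finset.mul_sum, stmt7g, Finsupp.sum]
    refine Finset.sum_congr rfl fun t _ => ?_
    rw [RCLike.ofReal_div]
    have hu' : ((u:ℝ):𝕜) ^ n ≠ 0 := pow_ne_zero _ (by exact_mod_cast hu0.ne')
    field_simp
    rw [div_pow, mul_assoc, mul_div_assoc', mul_div_cancel_left₀ _ hu']
  rw [hgn]
  exact mul_ne_zero (pow_ne_zero _ (by exact_mod_cast hu0.ne')) hn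
end Aux

/-- Let `𝕜` be `ℝ` or `ℂ` and let `x ∈ c₀` have only
finitely many zero coordinates.  Then there is a subspace `Y` with
`x ∈ Y ⊆ c₀`, `dim Y = 𝔠`, and every nonzero `y ∈ Y` has only finitely many
zero coordinates.  In particular `Z(c₀)` is maximal pointwise lineable. -/
theorem stmt7 {𝕜 : Type} [RCLike 𝕜]
    (x : ℕ → 𝕜) (hx : Tendsto x atTop (nhds 0))
    (hxz : {n : ℕ | x n = 0}.Finite) :
    ∃ Y : Submodule 𝕜 (ℕ → 𝕜), x ∈ Y ∧
      (↑Y : Set (ℕ → 𝕜)) ⊆ {y : ℕ → 𝕜 | Tendsto y atTop (nhds 0)} ∧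
      Module.rank 𝕜 ↥Y = Cardinal.continuum ∧
      ∀ y ∈ Y, y ≠ 0 → {n : ℕ | y n = 0}.Finite := by
  classical
  set S := Set.Ioc (0:ℝ) 1 with hS
  set v : ↥S → (ℕ → 𝕜) := fun t n => x n * ((t:ℝ):𝕜) ^ n with hv
  set Y := Submodule.span 𝕜 (Set.range v) with hY
  -- eventually x n ≠ 0
  have hxne : ∀ᶠ n in atTop, x n ≠ 0 := by
    rw [← Nat.cofinite_eq_atTop]
    exact hxz.compl_mem_cofinite
  -- membership characterization
  have heval : ∀ c : ↥S →₀ 𝕜, ∀ n, (c.sum fun t a => a • v t) n = x n * stmt7g c n := by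
    intro c n
    have : (c.sum fun t a => a • v t) n = c.sum fun t a => a * v t n := by
      simp [Finsupp.sum_apply, Finsupp.sum]
    rw [this, stmt7g, Finsupp.mul_sum]
    refine Finsupp.sum_congr fun t _ => ?_
    simp [hv]; ring
  have hmem : ∀ y ∈ Y, ∃ c : ↥S →₀ 𝕜, y = fun n => x n * stmt7g c n := by
    intro y hy
    rw [hY, Finsupp.mem_span_range_iff_exists_finsupp] at hy
    obtain ⟨c, hc⟩ := hy
    exact ⟨c, by funext n; rw [← hc, heval]⟩
  -- nonzero combos have finite zero sets and are nonzero
  have hkey : ∀ c : ↥S →₀ 𝕜, c ≠ 0 →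
      ∀ᶠ n in atTop, x n * stmt7g c n ≠ 0 := by
    intro c hc
    filter_upwards [hxne, stmt7g_ne c hc] with n h1 h2
    exact mul_ne_zero h1 h2
  have hli : LinearIndependent 𝕜 v := by
    rw [linearIndependent_iff]
    intro c hc
    by_contra hc0
    obtain ⟨n, hn⟩ := (hkey c hc0).exists
    apply hn
    rw [← heval]
    have : (c.sum fun t a => a • v t) = 0 := by
      rw [← Finsupp.linearCombination_apply]; exact hc
    rw [this]; rfl
  have h1S : (1:ℝ) ∈ S := by norm_num [hS]
  refine ⟨Y, ?_, ?_, ?_, ?_⟩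
  · have hxv : v ⟨1, h1S⟩ = x := by funext n; simp [hv]
    rw [hY]
    exact hxv ▸ Submodule.subset_span (Set.mem_range_self _)
  · set C : Submodule 𝕜 (ℕ → 𝕜) :=
      { carrier := {y : ℕ → 𝕜 | Tendsto y atTop (nhds 0)}
        add_mem' := fun ha hb => by have := Filter.Tendsto.add ha hb; simp only [add_zero] at this; exact this
        zero_mem' := tendsto_const_nhds
        smul_mem' := fun a y hy => by
          have := (hy.const_mul a : Tendsto (fun n => a * y n) atTop (nhds (a * 0))); simp only [mul_zero] at this; exact this } with hC
    have hle : Y ≤ C := by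
      rw [hY, Submodule.span_le]
      rintro _ ⟨t, rfl⟩
      show Tendsto (v t) atTop (nhds 0)
      refine squeeze_zero_norm (fun n => ?_) (tendsto_zero_iff_norm_tendsto_zero.mp hx)
      · rw [hv]
        simp only
        rw [norm_mul]
        have h1 : ‖((t:ℝ):𝕜) ^ n‖ ≤ 1 := by
          rw [norm_pow, RCLike.norm_ofReal, abs_of_pos t.2.1]
          exact pow_le_one₀ t.2.1.le t.2.2
        calc ‖x n‖ * ‖((t:ℝ):𝕜) ^ n‖ ≤ ‖x n‖ * 1 :=
              mul_le_mul_of_nonneg_left h1 (norm_nonneg _)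
          _ = ‖x n‖ := mul_one _
    exact fun y hy => hle hy
  · rw [hY, rank_span hli, Cardinal.mk_range_eq v hli.injective]
    exact Cardinal.mk_Ioc_real (by norm_num)
  · intro y hy hy0
    obtain ⟨c, rfl⟩ := hmem y hy
    have hc0 : c ≠ 0 := by
      rintro rfl
      apply hy0
      funext n
      simp [stmt7g]
    obtain ⟨N, hN⟩ := (hkey c hc0).exists_forall_of_atTop
    refine Set.Finite.subset (Set.finite_Iio N) ?_
    intro n hn
    by_contra hnN
    exact hN n (le_of_not_gt hnN) hn
end

section
/- Let p ∈ (0,∞] (with 𝕜 = ℝ or ℂ) and let E be a 𝕜-subspace of ℓ_p such that every element of E has infinitely many zero coordinates. If x₁, x₂ ∈ E are linearly independent, then the set {n ∈ ℕ : x₁(n) = 0 and x₂(n) = 0} is infinite. -/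
open Filter
open scoped ENNReal

/-! If the common zero set `F` of `x₁, x₂ ∈ E` were finite, then for every scalar `c` the vector
`x₂ - c • x₁ ∈ E` would vanish at some `n ∉ F`; there `x₁ n ≠ 0` and `c = x₂ n / x₁ n`. So the
countably many quotients `x₂ n / x₁ n` would exhaust the uncountable field `𝕜`. -/

section CommonZeros

variable {ι 𝕜 : Type*} [Field 𝕜]

lemma exists_div_eq_of_infinite_zeros_sub_smul {x₁ x₂ : ι → 𝕜}
    (hfin : {n | x₁ n = 0 ∧ x₂ n = 0}.Finite) (c : 𝕜)
    (hc : {n | (x₂ - c • x₁) n = 0}.Infinite) :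
    ∃ n, x₂ n / x₁ n = c := by
  obtain ⟨n, hzero, hnotcommon⟩ := (hc.sdiff hfin).nonempty
  simp only [Set.mem_ofPred_eq, Pi.sub_apply, Pi.smul_apply, smul_eq_mul, sub_eq_zero] at hzero
  have hx₁ : x₁ n ≠ 0 := fun h => hnotcommon ⟨h, by rw [hzero, h, mul_zero]⟩
  exact ⟨n, by rw [hzero, mul_div_cancel_right₀ c hx₁]⟩

lemma Submodule.countable_of_finite_common_zeros [Countable ι] {E : Submodule 𝕜 (ι → 𝕜)}
    (hEz : ∀ x ∈ E, {n | x n = 0}.Infinite) {x₁ x₂ : ι → 𝕜} (hx₁ : x₁ ∈ E) (hx₂ : x₂ ∈ E)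
    (hfin : {n | x₁ n = 0 ∧ x₂ n = 0}.Finite) : Countable 𝕜 :=
  Function.Surjective.countable (f := fun n => x₂ n / x₁ n) fun c =>
    exists_div_eq_of_infinite_zeros_sub_smul hfin c
      (hEz _ (E.sub_mem hx₂ (E.smul_mem c hx₁)))

theorem Submodule.infinite_common_zeros [Countable ι] [Uncountable 𝕜] {E : Submodule 𝕜 (ι → 𝕜)}
    (hEz : ∀ x ∈ E, {n | x n = 0}.Infinite) {x₁ x₂ : ι → 𝕜} (hx₁ : x₁ ∈ E) (hx₂ : x₂ ∈ E) :
    {n | x₁ n = 0 ∧ x₂ n = 0}.Infinite := fun hfin =>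
  not_countable (α := 𝕜) (countable_of_finite_common_zeros hEz hx₁ hx₂ hfin)

end CommonZeros

theorem stmt8_general {𝕜 : Type} [RCLike 𝕜]
    (E : Submodule 𝕜 (ℕ → 𝕜))
    (hEz : ∀ x ∈ E, {n : ℕ | x n = 0}.Infinite)
    (x₁ x₂ : ℕ → 𝕜) (hx₁ : x₁ ∈ E) (hx₂ : x₂ ∈ E) :
    {n : ℕ | x₁ n = 0 ∧ x₂ n = 0}.Infinite :=
  haveI : Uncountable 𝕜 := (algebraMap ℝ 𝕜).injective.uncountable
  E.infinite_common_zeros hEz hx₁ hx₂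

/-- Let `p ∈ (0,∞]` and let `E` be a subspace of `ℓ_p` every
element of which has infinitely many zero coordinates.  If `x₁, x₂ ∈ E` are
linearly independent, then `{n | x₁ n = 0 ∧ x₂ n = 0}` is infinite. -/
theorem stmt8 {𝕜 : Type} [RCLike 𝕜] (p : ℝ≥0∞) (hp : 0 < p)
    (E : Submodule 𝕜 (ℕ → 𝕜))
    (hEp : (↑E : Set (ℕ → 𝕜)) ⊆ {x | InLp p x})
    (hEz : ∀ x ∈ E, {n : ℕ | x n = 0}.Infinite)
    (x₁ x₂ : ℕ → 𝕜) (hx₁ : x₁ ∈ E) (hx₂ : x₂ ∈ E)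
    (hind : LinearIndependent 𝕜 ![x₁, x₂]) :
    {n : ℕ | x₁ n = 0 ∧ x₂ n = 0}.Infinite :=
  stmt8_general E hEz x₁ x₂ hx₁ hx₂
end

section
/- Let p ∈ (0,∞] (with 𝕜 = ℝ or ℂ), let N ≥ 2 be an integer, and let E be a 𝕜-subspace of ℓ_p such that every element of E has infinitely many zero coordinates. If x₁, …, x_N ∈ E are linearly independent, then the set {n ∈ ℕ : x₁(n) = x₂(n) = ⋯ = x_N(n) = 0} is infinite. -/
/-!
For `t ∈ 𝕜` the combination `y_t = ∑ i, tⁱ • xᵢ` lies in `E`. At a coordinate `n` where the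
`xᵢ n` do not all vanish, `y_t n` is a nonzero polynomial in `t`, so it vanishes for only finitely
many `t`. Since there are countably many coordinates and uncountably many scalars, some `t` makes
`y_t n ≠ 0` at every such `n`; the infinitely many zeros of that `y_t` are then common zeros of
all the `xᵢ`.
-/

open Filter
open scoped ENNReal

open Polynomial in
theorem finite_setOf_sum_mul_pow_eq_zero {K : Type*} [Field K] {N : ℕ} {a : Fin N → K}
    (ha : a ≠ 0) : {t : K | ∑ i, a i * t ^ (i : ℕ) = 0}.Finite := by
  classical
  have hP : ofFn N a ≠ 0 := (map_ne_zero_iff _ (injective_ofFn N)).2 ha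
  refine (finite_setOfPred_isRoot hP).subset fun t ht => ?_
  simpa [IsRoot, ofFn_eq_sum_monomial, eval_finsetSum] using ht

theorem exists_forall_sum_mul_pow_ne_zero {K ι : Type*} [Field K] [Uncountable K]
    [Countable ι] {N : ℕ} (a : ι → Fin N → K) :
    ∃ t : K, ∀ n, a n ≠ 0 → ∑ i, a n i * t ^ (i : ℕ) ≠ 0 := by
  have hcount : (⋃ n ∈ {n | a n ≠ 0}, {t : K | ∑ i, a n i * t ^ (i : ℕ) = 0}).Countable :=
    (Set.to_countable _).biUnion fun n hn => (finite_setOf_sum_mul_pow_eq_zero hn).countable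
  by_contra! h
  refine Set.not_countable_univ (hcount.mono fun t _ => ?_)
  obtain ⟨n, hn, ht⟩ := h t
  exact Set.mem_biUnion hn ht

theorem Submodule.infinite_setOf_forall_apply_eq_zero {K ι : Type*} [Field K] [Uncountable K]
    [Countable ι] {E : Submodule K (ι → K)} (hE : ∀ y ∈ E, {n | y n = 0}.Infinite) {N : ℕ}
    {x : Fin N → ι → K} (hx : ∀ i, x i ∈ E) : {n | ∀ i, x i n = 0}.Infinite := by
  obtain ⟨t, ht⟩ := exists_forall_sum_mul_pow_ne_zero fun n i => x i n
  have hy : ∑ i : Fin N, t ^ (i : ℕ) • x i ∈ E := sum_mem fun i _ => smul_mem _ _ (hx i)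
  refine (hE _ hy).mono fun n hn => ?_
  by_contra hne
  refine ht n (fun h => hne fun i => congrFun h i) ?_
  simpa [Finset.sum_apply, mul_comm] using hn

theorem stmt9_general {𝕜 : Type} [RCLike 𝕜]
    (N : ℕ)
    (E : Submodule 𝕜 (ℕ → 𝕜))
    (hEz : ∀ x ∈ E, {n : ℕ | x n = 0}.Infinite)
    (x : Fin N → (ℕ → 𝕜)) (hxE : ∀ i, x i ∈ E) :
    {n : ℕ | ∀ i, x i n = 0}.Infinite :=
  haveI : Uncountable 𝕜 := RCLike.ofReal_injective.uncountable
  E.infinite_setOf_forall_apply_eq_zero hEz hxE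

/-- Let `p ∈ (0,∞]`, `N ≥ 2`, and let `E` be a subspace of
`ℓ_p` every element of which has infinitely many zero coordinates.  If
`x₁, …, x_N ∈ E` are linearly independent, then
`{n | x₁ n = ⋯ = x_N n = 0}` is infinite. -/
theorem stmt9 {𝕜 : Type} [RCLike 𝕜] (p : ℝ≥0∞) (hp : 0 < p)
    (N : ℕ) (hN : 2 ≤ N)
    (E : Submodule 𝕜 (ℕ → 𝕜))
    (hEp : (↑E : Set (ℕ → 𝕜)) ⊆ {x | InLp p x})
    (hEz : ∀ x ∈ E, {n : ℕ | x n = 0}.Infinite)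
    (x : Fin N → (ℕ → 𝕜)) (hxE : ∀ i, x i ∈ E)
    (hind : LinearIndependent 𝕜 x) :
    {n : ℕ | ∀ i, x i n = 0}.Infinite :=
  stmt9_general N E hEz x hxE
end

section
/- Let X be a Hausdorff topological vector space over 𝕜 (= ℝ or ℂ) and let (u_n)_{n≥1} be a linearly independent sequence in X. Then there exists a sequence (λ_n)_{n≥1} of positive real numbers such that (λ_n u_n)_{n≥1} is ℓ_∞-independent: for every bounded scalar sequence (c_n), if the partial sums ∑_{n=1}^N c_n λ_n u_n converge to 0 in X as N → ∞, then c_n = 0 for all n. -/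
open Filter

section Drewnowski

open Set Topology
open scoped Classical Pointwise
set_option linter.unusedSectionVars false

variable {𝕜 X : Type} [RCLike 𝕜] [AddCommGroup X] [Module 𝕜 X]
    [TopologicalSpace X] [IsTopologicalAddGroup X] [ContinuousSMul 𝕜 X]
    [T2Space X]

/-- A choice of a "half" neighborhood of zero. -/
noncomputable def halveD (W : Set X) : Set X :=
  if h : W ∈ 𝓝 (0:X) then (exists_nhds_zero_half h).choose else Set.univ

lemma halveD_mem {W : Set X} (h : W ∈ 𝓝 (0:X)) : halveD W ∈ 𝓝 (0:X) := by
  rw [halveD, dif_pos h]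
  exact (exists_nhds_zero_half h).choose_spec.1

lemma halveD_add {W : Set X} (h : W ∈ 𝓝 (0:X)) {x y : X}
    (hx : x ∈ halveD W) (hy : y ∈ halveD W) : x + y ∈ W := by
  rw [halveD, dif_pos h] at hx hy
  exact (exists_nhds_zero_half h).choose_spec.2 x hx y hy

lemma halveD_subset {W : Set X} (h : W ∈ 𝓝 (0:X)) : halveD W ⊆ W := by
  intro x hx
  have h0 : (0:X) ∈ halveD W := mem_of_mem_nhds (halveD_mem h)
  simpa using halveD_add h hx h0

/-- Iterated halving. -/
noncomputable def chainD (W : Set X) (k : ℕ) : Set X := halveD^[k] W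

lemma chainD_succ (W : Set X) (k : ℕ) : chainD W (k+1) = halveD (chainD W k) :=
  Function.iterate_succ_apply' _ _ _

lemma chainD_mem {W : Set X} (h : W ∈ 𝓝 (0:X)) : ∀ k, chainD W k ∈ 𝓝 (0:X) := by
  intro k
  induction k with
  | zero => exact h
  | succ k ih => rw [chainD_succ]; exact halveD_mem ih

lemma chainD_subset {W : Set X} (h : W ∈ 𝓝 (0:X)) : ∀ k, chainD W k ⊆ W := by
  intro k
  induction k with
  | zero => exact le_rfl
  | succ k ih =>
    rw [chainD_succ]
    exact (halveD_subset (chainD_mem h k)).trans ih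

lemma chainD_sum {W : Set X} (h : W ∈ 𝓝 (0:X)) :
    ∀ (d m : ℕ) (x : ℕ → X), (∀ k ∈ Finset.Ico (m+1) (m+1+d), x k ∈ chainD W k) →
      (∑ k ∈ Finset.Ico (m+1) (m+1+d), x k) ∈ chainD W m := by
  intro d
  induction d with
  | zero =>
    intro m x _
    simp only [Nat.add_zero, Finset.Ico_self, Finset.sum_empty]
    exact mem_of_mem_nhds (chainD_mem h m)
  | succ d ih =>
    intro m x hx
    have hlt : m+1 < m+1+(d+1) := by omega
    rw [Finset.sum_eq_sum_Ico_succ_bot hlt]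
    have h1 : x (m+1) ∈ chainD W (m+1) := hx _ (by rw [Finset.mem_Ico]; omega)
    have h2 : (∑ k ∈ Finset.Ico (m+1+1) (m+1+1+d), x k) ∈ chainD W (m+1) := by
      apply ih (m+1) x
      intro k hk
      apply hx
      rw [Finset.mem_Ico] at hk ⊢
      omega
    rw [show m+1+(d+1) = m+1+1+d by omega]
    rw [chainD_succ] at h1 h2
    exact halveD_add (chainD_mem h m) h1 h2

/-- Decoding of a natural number into a triple of constraints. -/
def tripD (t : ℕ) : ℕ × ℕ × ℕ := (t.unpair.1, t.unpair.2.unpair.1, t.unpair.2.unpair.2)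

lemma tripD_le (t : ℕ) : (tripD t).1 ≤ t := Nat.unpair_left_le t

lemma tripD_pair (n p q : ℕ) : tripD (Nat.pair n (Nat.pair p q)) = (n, p, q) := by
  simp [tripD, Nat.unpair_pair]

variable (𝕜)

/-- The condition on the scaling factor at step `t`. -/
abbrev LCondD (u : ℕ → X) (t : ℕ) (V : ℕ → Set X) (r : ℝ) : Prop :=
  0 < r ∧ ∀ s, s < t → ∀ a : 𝕜, ‖a‖ ≤ ((tripD s).2.2 : ℝ) * r →
    a • u t ∈ chainD (halveD (halveD (V s))) t

/-- The condition on the separating neighborhood at step `s`. -/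
abbrev VCondD (u : ℕ → X) (s : ℕ) (f : ℕ → ℝ) (V : Set X) : Prop :=
  V ∈ 𝓝 (0:X) ∧ ∀ a : ℕ → 𝕜,
    (∀ k, k ≤ s → ‖a k‖ ≤ (((tripD s).2.2 : ℕ) : ℝ) * f k) →
    1/((((tripD s).2.1 : ℕ) : ℝ)+1) * f (tripD s).1 ≤ ‖a (tripD s).1‖ →
    ∀ v ∈ V, (∑ k ∈ Finset.range (s+1), a k • u k) + v ≠ 0

noncomputable def pickLamD (u : ℕ → X) (t : ℕ) (V : ℕ → Set X) : ℝ :=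
  if h : ∃ r, LCondD 𝕜 u t V r then h.choose else 1

noncomputable def pickVD (u : ℕ → X) (s : ℕ) (f : ℕ → ℝ) : Set X :=
  if h : ∃ V, VCondD 𝕜 u s f V then h.choose else Set.univ

noncomputable def histD (u : ℕ → X) : ℕ → (ℕ → ℝ) × (ℕ → Set X)
  | 0 => (fun _ => 1, fun _ => Set.univ)
  | (t+1) =>
      let h := histD u t
      let f : ℕ → ℝ := Function.update h.1 t (pickLamD 𝕜 u t h.2)
      (f, Function.update h.2 t (pickVD 𝕜 u t f))

noncomputable def lamD (u : ℕ → X) (t : ℕ) : ℝ := (histD 𝕜 u (t+1)).1 t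

noncomputable def VvD (u : ℕ → X) (s : ℕ) : Set X := (histD 𝕜 u (s+1)).2 s

lemma histD_succ_fst (u : ℕ → X) (t : ℕ) :
    (histD 𝕜 u (t+1)).1 = Function.update (histD 𝕜 u t).1 t (pickLamD 𝕜 u t (histD 𝕜 u t).2) := by
  rw [histD]

lemma histD_succ_snd (u : ℕ → X) (t : ℕ) :
    (histD 𝕜 u (t+1)).2 = Function.update (histD 𝕜 u t).2 t (pickVD 𝕜 u t ((histD 𝕜 u (t+1)).1)) := by
  conv_lhs => rw [histD]
  rw [histD_succ_fst]

lemma histD_fst_ge (u : ℕ → X) : ∀ t k, t ≤ k → (histD 𝕜 u t).1 k = 1 := by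
  intro t
  induction t with
  | zero => intro k _; rfl
  | succ t ih =>
    intro k h
    rw [histD_succ_fst, Function.update_of_ne (by omega)]
    exact ih k (by omega)

lemma histD_fst_lt (u : ℕ → X) : ∀ t k, k < t → (histD 𝕜 u t).1 k = lamD 𝕜 u k := by
  intro t
  induction t with
  | zero => intro k h; omega
  | succ t ih =>
    intro k h
    rcases eq_or_lt_of_le (Nat.lt_succ_iff.mp h) with he | hl
    · subst he; rfl
    · rw [histD_succ_fst, Function.update_of_ne (by omega)]
      exact ih k hl

lemma histD_snd_lt (u : ℕ → X) : ∀ t k, k < t → (histD 𝕜 u t).2 k = VvD 𝕜 u k := by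
  intro t
  induction t with
  | zero => intro k h; omega
  | succ t ih =>
    intro k h
    rcases eq_or_lt_of_le (Nat.lt_succ_iff.mp h) with he | hl
    · subst he; rfl
    · rw [histD_succ_snd, Function.update_of_ne (by omega)]
      exact ih k hl

lemma lamD_eq (u : ℕ → X) (t : ℕ) :
    lamD 𝕜 u t = pickLamD 𝕜 u t (histD 𝕜 u t).2 := by
  show (histD 𝕜 u (t+1)).1 t = _
  rw [histD_succ_fst, Function.update_self]

lemma VvD_eq (u : ℕ → X) (t : ℕ) :
    VvD 𝕜 u t = pickVD 𝕜 u t ((histD 𝕜 u (t+1)).1) := by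
  show (histD 𝕜 u (t+1)).2 t = _
  rw [histD_succ_snd, Function.update_self]

variable {𝕜}

/-- Separation lemma: the head set is compact and avoids `0`. -/
lemma sep_existsD (u : ℕ → X) (hu : LinearIndependent 𝕜 u) (f : ℕ → ℝ)
    (hf : ∀ k, 0 < f k) (s n p q : ℕ) (hn : n ≤ s) :
    ∃ V : Set X, V ∈ 𝓝 (0:X) ∧ ∀ a : ℕ → 𝕜,
      (∀ k, k ≤ s → ‖a k‖ ≤ ((q : ℕ) : ℝ) * f k) →
      1/(((p : ℕ) : ℝ)+1) * f n ≤ ‖a n‖ →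
      ∀ v ∈ V, (∑ k ∈ Finset.range (s+1), a k • u k) + v ≠ 0 := by
  classical
  set n' : Fin (s+1) := ⟨n, by omega⟩ with hn'
  set S : Set (Fin (s+1) → 𝕜) :=
    (Set.univ.pi fun k : Fin (s+1) => Metric.closedBall (0:𝕜) ((q : ℝ) * f k)) ∩
      {b | 1/((p : ℝ)+1) * f n ≤ ‖b n'‖} with hS
  have hScomp : IsCompact S :=
    (isCompact_univ_pi fun k => isCompact_closedBall _ _).inter_right
      (isClosed_le continuous_const ((continuous_apply n').norm))
  set φ : (Fin (s+1) → 𝕜) → X := fun b => ∑ k, b k • u (k:ℕ) with hφdef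
  have hφ : Continuous φ :=
    continuous_finset_sum _ fun k _ => (continuous_apply k).smul continuous_const
  have hK : IsCompact (φ '' S) := hScomp.image hφ
  have h0 : (0:X) ∉ φ '' S := by
    rintro ⟨b, hb, hb0⟩
    have hli : LinearIndependent 𝕜 (u ∘ (Fin.val : Fin (s+1) → ℕ)) :=
      hu.comp _ Fin.val_injective
    have hz : ∀ i, b i = 0 := by
      apply Fintype.linearIndependent_iff.mp hli b
      simpa [hφdef, Function.comp] using hb0
    have hb2 := hb.2
    simp only [Set.mem_setOf_eq] at hb2
    rw [hz n'] at hb2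
    simp only [norm_zero] at hb2
    have : 0 < 1/((p : ℝ)+1) * f n := mul_pos (by positivity) (hf n)
    linarith
  have hKU : φ '' S ⊆ ({0}ᶜ : Set X) := by
    intro x hx hx0
    exact h0 (by simpa [Set.mem_singleton_iff.mp hx0] using hx)
  obtain ⟨V, hV, hKV⟩ :=
    compact_open_separated_add_right hK isOpen_compl_singleton hKU
  refine ⟨V, hV, fun a ha1 ha2 v hv => ?_⟩
  have hmem : (∑ k ∈ Finset.range (s+1), a k • u k) ∈ φ '' S := by
    refine ⟨fun k => a k, ⟨?_, ?_⟩, ?_⟩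
    · intro k _
      simp only [Metric.mem_closedBall, dist_zero_right]
      exact ha1 k (Nat.lt_succ_iff.mp k.isLt)
    · simpa [hn'] using ha2
    · exact Fin.sum_univ_eq_sum_range (fun k => a k • u k) (s+1)
  have hadd : (∑ k ∈ Finset.range (s+1), a k • u k) + v ∈ φ '' S + V :=
    Set.add_mem_add hmem hv
  exact hKV hadd

/-- Existence of a suitable positive scaling factor. -/
lemma exists_rD (x : X) (N : ℕ → Set X) (Q : ℕ → ℕ) :
    ∀ t, (∀ s, s < t → N s ∈ 𝓝 (0:X)) →
      ∃ r : ℝ, 0 < r ∧ ∀ s, s < t → ∀ a : 𝕜, ‖a‖ ≤ ((Q s : ℕ) : ℝ) * r → a • x ∈ N s := by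
  intro t
  induction t with
  | zero => exact fun _ => ⟨1, one_pos, fun s hs => by omega⟩
  | succ t ih =>
    intro hN
    obtain ⟨r, hr, hrr⟩ := ih (fun s hs => hN s (by omega))
    have hcont : Continuous fun a : 𝕜 => a • x := continuous_id.smul continuous_const
    have hpre : (fun a : 𝕜 => a • x) ⁻¹' (N t) ∈ 𝓝 (0:𝕜) := by
      apply (hcont.continuousAt (x := 0)).preimage_mem_nhds
      simpa using hN t (by omega)
    obtain ⟨δ, hδ, hball⟩ := Metric.mem_nhds_iff.mp hpre
    refine ⟨min r (δ/(2*((Q t : ℝ)+1))), lt_min hr (by positivity), ?_⟩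
    intro s hs a ha
    by_cases h : s = t
    · subst h
      apply hball
      simp only [Metric.mem_ball, dist_zero_right]
      have key : ((Q s : ℕ) : ℝ) * (δ/(2*((Q s : ℝ)+1))) < δ := by
        have h2 : (0:ℝ) < 2*((Q s : ℝ)+1) := by positivity
        rw [mul_div_assoc', div_lt_iff₀ h2]
        nlinarith [Nat.cast_nonneg (α := ℝ) (Q s)]
      calc ‖a‖ ≤ ((Q s : ℕ) : ℝ) * min r (δ/(2*((Q s : ℝ)+1))) := ha
        _ ≤ ((Q s : ℕ) : ℝ) * (δ/(2*((Q s : ℝ)+1))) :=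
            mul_le_mul_of_nonneg_left (min_le_right _ _) (Nat.cast_nonneg _)
        _ < δ := key
    · have hs' : s < t := by omega
      apply hrr s hs' a
      exact ha.trans (mul_le_mul_of_nonneg_left (min_le_left _ _) (Nat.cast_nonneg _))

/-- Main invariant, by strong induction. -/
lemma mainD (u : ℕ → X) (hu : LinearIndependent 𝕜 u) :
    ∀ t, 0 < lamD 𝕜 u t ∧ VCondD 𝕜 u t ((histD 𝕜 u (t+1)).1) (VvD 𝕜 u t) := by
  intro t
  induction t using Nat.strong_induction_on with
  | _ t IH =>
  have hEx : ∃ r, LCondD 𝕜 u t ((histD 𝕜 u t).2) r := by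
    obtain ⟨r, hr, hrr⟩ := exists_rD (𝕜 := 𝕜) (u t)
      (fun s => chainD (halveD (halveD (VvD 𝕜 u s))) t) (fun s => (tripD s).2.2) t
      (fun s hs => chainD_mem (halveD_mem (halveD_mem ((IH s hs).2.1))) t)
    exact ⟨r, hr, fun s hs a ha => by
      rw [histD_snd_lt 𝕜 u t s hs]; exact hrr s hs a ha⟩
  have hLC : LCondD 𝕜 u t ((histD 𝕜 u t).2) (lamD 𝕜 u t) := by
    rw [lamD_eq, pickLamD, dif_pos hEx]
    exact hEx.choose_spec
  have hlam : 0 < lamD 𝕜 u t := hLC.1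
  have hfpos : ∀ k, 0 < (histD 𝕜 u (t+1)).1 k := by
    intro k
    rcases lt_or_ge k (t+1) with h | h
    · rw [histD_fst_lt 𝕜 u (t+1) k h]
      rcases eq_or_lt_of_le (Nat.lt_succ_iff.mp h) with he | hl
      · subst he; exact hlam
      · exact (IH k hl).1
    · rw [histD_fst_ge 𝕜 u (t+1) k h]; exact one_pos
  have hVEx : ∃ V, VCondD 𝕜 u t ((histD 𝕜 u (t+1)).1) V := by
    obtain ⟨V, h1, h2⟩ := sep_existsD u hu ((histD 𝕜 u (t+1)).1) hfpos t
      (tripD t).1 (tripD t).2.1 (tripD t).2.2 (tripD_le t)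
    exact ⟨V, h1, h2⟩
  have hVC : VCondD 𝕜 u t ((histD 𝕜 u (t+1)).1) (VvD 𝕜 u t) := by
    rw [VvD_eq, pickVD, dif_pos hVEx]
    exact hVEx.choose_spec
  exact ⟨hlam, hVC⟩

lemma pick_specD (u : ℕ → X) (hu : LinearIndependent 𝕜 u) (t : ℕ) :
    ∀ s, s < t → ∀ a : 𝕜, ‖a‖ ≤ ((tripD s).2.2 : ℝ) * lamD 𝕜 u t →
      a • u t ∈ chainD (halveD (halveD (VvD 𝕜 u s))) t := by
  have hEx : ∃ r, LCondD 𝕜 u t ((histD 𝕜 u t).2) r := by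
    obtain ⟨r, hr, hrr⟩ := exists_rD (𝕜 := 𝕜) (u t)
      (fun s => chainD (halveD (halveD (VvD 𝕜 u s))) t) (fun s => (tripD s).2.2) t
      (fun s hs => chainD_mem (halveD_mem (halveD_mem ((mainD u hu s).2.1))) t)
    exact ⟨r, hr, fun s hs a ha => by
      rw [histD_snd_lt 𝕜 u t s hs]; exact hrr s hs a ha⟩
  have hLC : LCondD 𝕜 u t ((histD 𝕜 u t).2) (lamD 𝕜 u t) := by
    rw [lamD_eq, pickLamD, dif_pos hEx]
    exact hEx.choose_spec
  intro s hs a ha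
  have := hLC.2 s hs a ha
  rwa [histD_snd_lt 𝕜 u t s hs] at this

end Drewnowski

open Topology in

/-- **Drewnowski.** Let `X` be a Hausdorff topological vector
space over `𝕜 = ℝ` or `ℂ` and `(u n)` a linearly independent sequence in `X`.
Then there are positive reals `(lam n)` such that `(lam n • u n)` is
`ℓ_∞`-independent: for every bounded scalar sequence `(c n)`, if the partial
sums `∑_{n < N} c n • (lam n • u n)` converge to `0`, then `c n = 0` for all
`n`. -/
theorem stmt10 {𝕜 X : Type} [RCLike 𝕜] [AddCommGroup X] [Module 𝕜 X]
    [TopologicalSpace X] [IsTopologicalAddGroup X] [ContinuousSMul 𝕜 X]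
    [T2Space X] (u : ℕ → X) (hu : LinearIndependent 𝕜 u) :
    ∃ lam : ℕ → ℝ, (∀ n, 0 < lam n) ∧
      ∀ c : ℕ → 𝕜, (∃ C : ℝ, ∀ n, ‖c n‖ ≤ C) →
        Tendsto (fun N => ∑ n ∈ Finset.range N, c n • (((lam n : ℝ) : 𝕜) • u n))
          atTop (nhds 0) →
        ∀ n, c n = 0 := by
  classical
  refine ⟨lamD 𝕜 u, fun n => (mainD u hu n).1, ?_⟩
  rintro c ⟨C, hC⟩ hconv n
  by_contra hcn
  have hcpos : 0 < ‖c n‖ := norm_pos_iff.mpr hcn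
  obtain ⟨q, hq⟩ := exists_nat_ge C
  obtain ⟨p, hp⟩ := exists_nat_one_div_lt hcpos
  set s := Nat.pair n (Nat.pair p q) with hs_def
  have htrip : tripD s = (n, p, q) := tripD_pair n p q
  have hns : n ≤ s := by
    have := tripD_le s
    rw [htrip] at this
    exact this
  have hVC := (mainD u hu s).2
  have hVs : VvD 𝕜 u s ∈ 𝓝 (0:X) := hVC.1
  have hhv : halveD (VvD 𝕜 u s) ∈ 𝓝 (0:X) := halveD_mem hVs
  have hhv2 : halveD (halveD (VvD 𝕜 u s)) ∈ 𝓝 (0:X) := halveD_mem hhv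
  have hnegpre : (fun x : X => -x) ⁻¹' (halveD (halveD (VvD 𝕜 u s))) ∈ 𝓝 (0:X) := by
    apply (continuous_neg.continuousAt (x := (0:X))).preimage_mem_nhds
    simpa using hhv2
  have hU : halveD (halveD (VvD 𝕜 u s)) ∩
      ((fun x : X => -x) ⁻¹' (halveD (halveD (VvD 𝕜 u s)))) ∈ 𝓝 (0:X) :=
    Filter.inter_mem hhv2 hnegpre
  have hev := hconv.eventually_mem hU
  obtain ⟨M₀, hM₀⟩ := eventually_atTop.mp hev
  set M := max M₀ (s+1) with hM_def
  have hM1 : M₀ ≤ M := le_max_left _ _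
  have hM2 : s+1 ≤ M := le_max_right _ _
  have hSU := hM₀ M hM1
  set a : ℕ → 𝕜 := fun k => c k * ((lamD 𝕜 u k : ℝ) : 𝕜) with ha_def
  have hsum_eq : (∑ k ∈ Finset.range M, c k • (((lamD 𝕜 u k : ℝ) : 𝕜) • u k)) =
      ∑ k ∈ Finset.range M, a k • u k :=
    Finset.sum_congr rfl fun k _ => smul_smul _ _ _
  have hanorm : ∀ k, ‖a k‖ = ‖c k‖ * lamD 𝕜 u k := by
    intro k
    rw [ha_def]
    simp only []
    rw [norm_mul, RCLike.norm_ofReal, abs_of_pos (mainD u hu k).1]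
  have haq : ∀ k, ‖a k‖ ≤ (q : ℝ) * lamD 𝕜 u k := by
    intro k
    rw [hanorm]
    exact mul_le_mul_of_nonneg_right ((hC k).trans hq) (mainD u hu k).1.le
  have hsplit := Finset.sum_range_add_sum_Ico (fun k => a k • u k) hM2
  have htail : (∑ k ∈ Finset.Ico (s+1) M, a k • u k) ∈ halveD (halveD (VvD 𝕜 u s)) := by
    have hterm : ∀ k ∈ Finset.Ico (s+1) M, a k • u k ∈
        chainD (halveD (halveD (VvD 𝕜 u s))) k := by
      intro k hk
      rw [Finset.mem_Ico] at hk
      apply pick_specD u hu k s (by omega)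
      rw [htrip]
      exact haq k
    have hM' : s+1+(M-(s+1)) = M := by omega
    have := chainD_sum hhv2 (M-(s+1)) s (fun k => a k • u k) (by rw [hM']; exact hterm)
    rw [hM'] at this
    exact chainD_subset hhv2 s this
  have hsep := hVC.2
  rw [htrip] at hsep
  have hfk : ∀ k, k ≤ s → (histD 𝕜 u (s+1)).1 k = lamD 𝕜 u k :=
    fun k hk => histD_fst_lt 𝕜 u (s+1) k (by omega)
  -- the perturbation vector
  set SM := ∑ k ∈ Finset.range M, c k • (((lamD 𝕜 u k : ℝ) : 𝕜) • u k) with hSM_def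
  have hnegSM : -SM ∈ halveD (halveD (VvD 𝕜 u s)) := hSU.2
  have hv_mem : (∑ k ∈ Finset.Ico (s+1) M, a k • u k) + (-SM) ∈ VvD 𝕜 u s :=
    halveD_subset hVs (halveD_add hhv htail hnegSM)
  have heq : (∑ k ∈ Finset.range (s+1), a k • u k) +
      ((∑ k ∈ Finset.Ico (s+1) M, a k • u k) + (-SM)) = 0 := by
    rw [← add_assoc, hsplit, ← hsum_eq, add_neg_cancel]
  refine hsep a ?_ ?_ _ hv_mem heq
  · intro k hk
    rw [hfk k hk]
    exact haq k
  · rw [hfk n hns, hanorm]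
    exact mul_le_mul_of_nonneg_right hp.le (mainD u hu n).1.le
end

section
/- Let p ∈ (0,∞] (with 𝕜 = ℝ or ℂ), let F be an infinite-dimensional closed 𝕜-subspace of ℓ_p with c₀ ⊆ F, and let α be a nonzero cardinal with α ≤ 𝔠. Then F \ Z(F) is (α,𝔠)-spaceable if and only if α is finite, where F \ Z(F) is (α,𝔠)-spaceable means: there exists a subspace V ⊆ F with dim V = α all of whose elements have infinitely many zero coordinates, and for every subspace V ⊆ F with dim V = α all of whose elements have infinitely many zero coordinates there exists a closed subspace W with V ⊆ W ⊆ F, dim W = 𝔠, and every element of W has infinitely many zero coordinates. -/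
/-!
If `α` is infinite, let `V` be spanned by all unit vectors `eₖ` together with `α` sequences
vanishing at odd places; every element of `V` has infinitely many zeros, but a closed `W ⊇ V`
contains the limit `∑ 2⁻ᵏ eₖ` of partial sums, which has none.

If `α` is finite, the elements of `V` have a common infinite zero set `A`: over the uncountable
field `𝕜` the countably many nonzero coordinate functionals on `V` have a common non-root. Split
`A` into two infinite halves `A₁, A₂` and take `W = V ⊕ {x ∈ F | supp x ⊆ A₁}`. Every element of
`W` vanishes on `A₂`; geometric sequences `(tᵏ)` for `t ∈ (0,1)`, written along `A₁`, give `𝔠`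
independent vectors; and `W` is closed since `ℓ_p`-convergence implies coordinatewise
convergence and the finite-dimensional `V` is closed for the product topology.
-/

open Filter
open scoped ENNReal

open Set Function Cardinal Topology

section Algebra

variable {K : Type*} [Field K]

theorem Module.Dual.exists_forall_apply_ne_zero [Uncountable K] {E ι : Type*} [AddCommGroup E]
    [Module K E] [FiniteDimensional K E] [Countable ι] (φ : ι → Module.Dual K E)
    (hφ : ∀ i, φ i ≠ 0) : ∃ x, ∀ i, φ i x ≠ 0 := by
  classical
  let b := Module.finBasis K E
  let d := Module.finrank K E
  -- `φ i` restricted to the moment curve `t ↦ ∑ j, t ^ j • b j` is a nonzero polynomial in `t`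
  let P : ι → Polynomial K := fun i => Polynomial.ofFn d fun j => φ i (b j)
  have hP : ∀ i t, (P i).eval t = φ i (∑ j : Fin d, t ^ (j : ℕ) • b j) := fun i t => by
    simp [P, Polynomial.ofFn_eq_sum_monomial, Polynomial.eval_finsetSum, mul_comm]
  have hP0 : ∀ i, P i ≠ 0 := fun i h => hφ i <| b.ext fun j => by
    simpa using congrFun (Polynomial.injective_ofFn d (h.trans (map_zero _).symm)) j
  have hroots : (⋃ i, {t | (P i).IsRoot t}).Countable :=
    countable_iUnion fun i => (Polynomial.finite_setOfPred_isRoot (hP0 i)).countable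
  obtain ⟨t, ht⟩ := (ne_univ_iff_exists_notMem (⋃ i, {t | (P i).IsRoot t})).1 fun h =>
    not_countable_univ (h ▸ hroots)
  exact ⟨∑ j : Fin d, t ^ (j : ℕ) • b j, fun i h => ht (mem_iUnion.2 ⟨i, by simpa [← hP] using h⟩)⟩

theorem Submodule.infinite_setOf_forall_eq_zero [Uncountable K] {ι : Type*} [Countable ι]
    (V : Submodule K (ι → K)) [FiniteDimensional K V]
    (hV : ∀ x ∈ V, {n | x n = 0}.Infinite) : {n | ∀ x ∈ V, x n = 0}.Infinite := by
  let B := {n | ¬ ∀ x ∈ V, x n = 0}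
  obtain ⟨w, hw⟩ := Module.Dual.exists_forall_apply_ne_zero
    (fun n : B => (LinearMap.proj (n : ι)).comp V.subtype) fun n h => n.2 fun x hx => by
      simpa using LinearMap.congr_fun h ⟨x, hx⟩
  refine (hV w w.2).mono fun n hn => ?_
  by_contra h
  exact hw ⟨n, h⟩ hn

theorem linearIndependent_geometric {ι : Type*} {e : ι → K} (he : Injective e) :
    LinearIndependent K fun i (n : ℕ) => e i ^ n :=
  Module.End.eigenvectors_linearIndependent' (LinearMap.funLeft K K Nat.succ) e he _ fun i =>
    ⟨Module.End.mem_eigenspace_iff.2 (funext fun n => by simp [pow_succ, mul_comm]),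
      fun h => by simpa using congrFun h 0⟩

end Algebra

section Support

variable (R : Type*) [Semiring R]

def supportedIn {ι : Type*} (S : Set ι) : Submodule R (ι → R) where
  carrier := {x | support x ⊆ S}
  add_mem' hx hy := (support_add _ _).trans (union_subset hx hy)
  zero_mem' := by simp
  smul_mem' c _ hx := (support_const_smul_subset c _).trans hx

def eventuallyZeroAlong (a : ℕ → ℕ) : Submodule R (ℕ → R) where
  carrier := {x | ∀ᶠ k in atTop, x (a k) = 0}
  add_mem' hx hy := (hx.and hy).mono fun k h => by simp [h.1, h.2]
  zero_mem' := Eventually.of_forall fun _ => rfl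
  smul_mem' c _ hx := hx.mono fun k h => by simp [h]

variable {R}

theorem single_mem_eventuallyZeroAlong {a : ℕ → ℕ} (ha : Tendsto a atTop atTop) (i : ℕ) (c : R) :
    Pi.single i c ∈ eventuallyZeroAlong R a :=
  (ha.eventually_ne_atTop i).mono fun k hk => by simp [hk]

theorem supportedIn_le_eventuallyZeroAlong {S : Set ℕ} {a : ℕ → ℕ} (h : ∀ k, a k ∉ S) :
    supportedIn R S ≤ eventuallyZeroAlong R a := fun _ hx =>
  Eventually.of_forall fun k => notMem_support.1 fun hk => h k (hx hk)

theorem infinite_setOf_eq_zero_of_mem_eventuallyZeroAlong {a : ℕ → ℕ} (ha : Injective a)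
    {x : ℕ → R} (hx : x ∈ eventuallyZeroAlong R a) : {n | x n = 0}.Infinite := by
  have hinf : {k | x (a k) = 0}.Infinite := Nat.frequently_atTop_iff_infinite.1 hx.frequently
  exact (hinf.image ha.injOn).mono (image_subset_iff.2 fun _ hk => hk)

theorem tendsto_extend_zero {M : Type*} [Zero M] [TopologicalSpace M] {a : ℕ → ℕ}
    (ha : Injective a) {x : ℕ → M} (hx : Tendsto x atTop (𝓝 0)) :
    Tendsto (extend a x 0) atTop (𝓝 0) := by
  rw [← Nat.cofinite_eq_atTop] at hx ⊢
  intro U hU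
  refine ((hx hU).image a).subset fun n hn => ?_
  by_cases h : ∃ k, a k = n
  · obtain ⟨k, rfl⟩ := h
    exact ⟨k, by simpa [ha.extend_apply] using hn, rfl⟩
  · exact absurd (by simpa [extend_apply' _ _ _ h] using mem_of_mem_nhds hU) hn

noncomputable def geomAlong (a : ℕ → ℕ) (t : R) : ℕ → R :=
  ExtendByZero.linearMap R a fun k => t ^ k

theorem geomAlong_mem_supportedIn (a : ℕ → ℕ) (t : R) :
    geomAlong a t ∈ supportedIn R (range a) := fun n hn => by
  by_contra h
  exact hn ((ExtendByZero.linearMap_apply ..).trans (extend_apply' _ _ n h))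

theorem linearIndependent_geomAlong {K : Type*} [Field K] {a : ℕ → ℕ} (ha : Injective a)
    {ι : Type*} {e : ι → K} (he : Injective e) : LinearIndependent K fun i => geomAlong a (e i) :=
  (linearIndependent_geometric he).map' _ (LinearMap.ker_eq_bot.2 (extend_injective ha 0))

end Support

section Sequences

variable (𝕜 : Type) [RCLike 𝕜]

def c₀ : Submodule 𝕜 (ℕ → 𝕜) where
  carrier := {x | Tendsto x atTop (𝓝 0)}
  add_mem' hx hy := by rw [mem_ofPred_eq, ← add_zero (0 : 𝕜)]; exact hx.add hy
  zero_mem' := tendsto_const_nhds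
  smul_mem' c _ hx := by rw [mem_ofPred_eq, ← smul_zero c]; exact hx.const_smul c

variable {𝕜}

theorem single_mem_c₀ (k : ℕ) (c : 𝕜) : Pi.single k c ∈ c₀ 𝕜 :=
  (tendsto_const_nhds (x := (0 : 𝕜))).congr' <|
    (eventually_ne_atTop k).mono fun n hn => by simp [hn]

theorem geomAlong_mem_c₀ {a : ℕ → ℕ} (ha : Injective a) {t : 𝕜} (ht : ‖t‖ < 1) :
    geomAlong a t ∈ c₀ 𝕜 :=
  tendsto_extend_zero ha (tendsto_pow_atTop_nhds_zero_of_norm_lt_one ht)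

theorem exists_linearIndepOn_subset_c₀_supportedIn {a : ℕ → ℕ} (ha : Injective a) {α : Cardinal}
    (hα : α ≤ 𝔠) : ∃ s : Set (ℕ → 𝕜), #s = α ∧ LinearIndepOn 𝕜 id s ∧
      s ⊆ c₀ 𝕜 ⊓ supportedIn 𝕜 (range a) := by
  obtain ⟨T, rfl⟩ := le_mk_iff_exists_set.1 (hα.trans_eq (mk_Ioo_real zero_lt_one).symm)
  let g : T → ℕ → 𝕜 := fun t => geomAlong a ((t : ℝ) : 𝕜)
  have hg : LinearIndependent 𝕜 g :=
    linearIndependent_geomAlong ha fun s t h => Subtype.ext (Subtype.ext (by simpa using h))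
  refine ⟨range g, mk_range_eq g hg.injective, (linearIndepOn_id_range_iff hg.injective).2 hg, ?_⟩
  rintro _ ⟨⟨⟨t, ht⟩, -⟩, rfl⟩
  exact ⟨geomAlong_mem_c₀ ha (by simpa [abs_of_pos ht.1] using ht.2), geomAlong_mem_supportedIn a _⟩

theorem rank_le_continuum (U : Submodule 𝕜 (ℕ → 𝕜)) :
    Module.rank 𝕜 U ≤ 𝔠 := by
  have h𝕜 : #𝕜 ≤ 𝔠 := calc
    #𝕜 ≤ #(ℝ × ℝ) := mk_le_of_injective (f := fun z : 𝕜 => (RCLike.re z, RCLike.im z))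
      fun z w h => RCLike.ext (congrArg Prod.fst h) (congrArg Prod.snd h)
    _ = 𝔠 := by simp [mk_real]
  calc Module.rank 𝕜 U ≤ #(ℕ → 𝕜) := U.rank_le.trans (rank_le_card 𝕜 _)
    _ ≤ 𝔠 := by simpa [mk_arrow] using power_le_power_right (c := ℵ₀) h𝕜

end Sequences

section Lp

variable {𝕜 : Type} [RCLike 𝕜] {p : ℝ≥0∞}

theorem tendsto_rpow_nhds_zero_iff {ι : Type*} {l : Filter ι} {g : ι → ℝ} (hg : ∀ i, 0 ≤ g i)
    {q : ℝ} (hq : 0 < q) : Tendsto (fun i => g i ^ q) l (𝓝 0) ↔ Tendsto g l (𝓝 0) := by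
  refine ⟨fun h => ?_, fun h => by simpa [Real.zero_rpow hq.ne'] using h.rpow_const (Or.inr hq.le)⟩
  have := h.rpow_const (p := q⁻¹) (Or.inr (inv_nonneg.2 hq.le))
  rw [Real.zero_rpow (inv_ne_zero hq.ne')] at this
  exact this.congr fun i => Real.rpow_rpow_inv (hg i) hq.ne'

theorem memℓp_of_inLp (hp : 0 < p) {x : ℕ → 𝕜} (hx : InLp p x) : Memℓp x p := by
  unfold InLp at hx
  split_ifs at hx with hpt
  · obtain ⟨C, hC⟩ := hx
    exact hpt ▸ memℓp_infty_iff.2 ⟨C, forall_mem_range.2 hC⟩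
  · exact (memℓp_gen_iff (ENNReal.toReal_pos hp.ne' hpt)).2 hx

theorem tendsto_dp_iff_tendsto_tsum (hp : 0 < p) (hpt : p ≠ ⊤) {ι : Type*} {l : Filter ι}
    {f : ι → ℕ → 𝕜} {x : ℕ → 𝕜} :
    Tendsto (fun j => dp p (f j) x) l (𝓝 0) ↔
      Tendsto (fun j => ∑' n, ‖f j n - x n‖ ^ p.toReal) l (𝓝 0) := by
  simp only [dp, if_neg hpt]
  split_ifs
  · rfl
  · rw [one_div]
    exact tendsto_rpow_nhds_zero_iff (fun j => tsum_nonneg fun n => by positivity)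
      (inv_pos.2 (ENNReal.toReal_pos hp.ne' hpt))

theorem tendsto_apply_of_tendsto_dp (hp : 0 < p) {f : ℕ → ℕ → 𝕜} {x : ℕ → 𝕜}
    (hf : ∀ j, InLp p (f j)) (hx : InLp p x)
    (h : Tendsto (fun j => dp p (f j) x) atTop (𝓝 0)) (n : ℕ) :
    Tendsto (fun j => f j n) atTop (𝓝 (x n)) := by
  have hfx : ∀ j, Memℓp (f j - x) p := fun j => (memℓp_of_inLp hp (hf j)).sub (memℓp_of_inLp hp hx)
  rw [tendsto_iff_norm_sub_tendsto_zero]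
  by_cases hpt : p = ⊤
  · subst hpt
    refine squeeze_zero (fun j => norm_nonneg _) (fun j => ?_) h
    exact (le_ciSup (memℓp_infty_iff.1 (hfx j)) n).trans_eq (if_pos rfl).symm
  · have hq := ENNReal.toReal_pos hp.ne' hpt
    rw [← tendsto_rpow_nhds_zero_iff (fun j => norm_nonneg _) hq]
    refine squeeze_zero (fun j => by positivity) (fun j => ?_)
      ((tendsto_dp_iff_tendsto_tsum hp hpt).1 h)
    exact ((memℓp_gen_iff hq).1 (hfx j)).le_tsum n fun m _ => by positivity

theorem tendsto_dp_sum_single (hp : 0 < p) {x : ℕ → 𝕜} (hx : InLp p x)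
    (hx0 : Tendsto x atTop (𝓝 0)) :
    Tendsto (fun j => dp p (∑ k ∈ Finset.range j, Pi.single k (x k)) x) atTop (𝓝 0) := by
  have hnorm : ∀ j n, ‖(∑ k ∈ Finset.range j, Pi.single k (x k)) n - x n‖ =
      if n < j then 0 else ‖x n‖ := fun j n => by
    rw [Finset.sum_apply, Finset.sum_pi_single]
    simp only [Finset.mem_range]
    split_ifs <;> simp
  by_cases hpt : p = ⊤
  · subst hpt
    refine Metric.tendsto_atTop.2 fun ε hε => ?_
    obtain ⟨N, hN⟩ := Metric.tendsto_atTop.1 hx0 (ε / 2) (half_pos hε)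
    refine ⟨N, fun j hj => ?_⟩
    have hle : dp ⊤ (∑ k ∈ Finset.range j, Pi.single k (x k)) x ≤ ε / 2 :=
      (if_pos rfl).trans_le <| ciSup_le fun n => by
        rw [hnorm]
        split_ifs with hn
        · positivity
        · simpa using (hN n (by omega)).le
    have h0 : 0 ≤ dp ⊤ (∑ k ∈ Finset.range j, Pi.single k (x k)) x :=
      (Real.iSup_nonneg fun n => norm_nonneg _).trans_eq (if_pos rfl).symm
    rw [Real.dist_0_eq_abs, abs_of_nonneg h0]
    linarith
  · have hq := ENNReal.toReal_pos hp.ne' hpt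
    have hxs : Summable fun n => ‖x n‖ ^ p.toReal := by simpa [InLp, hpt] using hx
    have htail : ∀ j, ∑' n, ‖(∑ k ∈ Finset.range j, Pi.single k (x k)) n - x n‖ ^ p.toReal =
        ∑' k, ‖x (k + j)‖ ^ p.toReal := fun j => by
      simp_rw [hnorm]
      rw [← (hxs.of_nonneg_of_le (fun n => by positivity) fun n => ?_).sum_add_tsum_nat_add j]
      · rw [Finset.sum_eq_zero fun k hk => by simp [Finset.mem_range.1 hk, Real.zero_rpow hq.ne']]
        simp
      · split_ifs <;> simp [Real.zero_rpow hq.ne', Real.rpow_nonneg]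
    rw [tendsto_dp_iff_tendsto_tsum hp hpt]
    simpa only [htail] using tendsto_sum_nat_add fun n => ‖x n‖ ^ p.toReal

theorem IsClosedInLp.mem_of_single_mem (hp : 0 < p) {W : Submodule 𝕜 (ℕ → 𝕜)}
    (hW : IsClosedInLp p (W : Set (ℕ → 𝕜))) (hsingle : ∀ k, Pi.single k 1 ∈ W) {x : ℕ → 𝕜}
    (hx : InLp p x) (hx0 : Tendsto x atTop (𝓝 0)) : x ∈ W :=
  hW _ (fun j => W.sum_mem fun k _ => by
      simpa [← Pi.single_smul'] using W.smul_mem (x k) (hsingle k))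
    x hx (tendsto_dp_sum_single hp hx hx0)

theorem inLp_geometric (hp : 0 < p) {r : 𝕜} (hr : ‖r‖ < 1) : InLp p fun n => r ^ n := by
  unfold InLp
  split_ifs with hpt
  · exact ⟨1, fun n => by simpa using pow_le_one₀ (norm_nonneg r) hr.le⟩
  · have hq := ENNReal.toReal_pos hp.ne' hpt
    simp_rw [norm_pow, ← Real.rpow_pow_comm (norm_nonneg r)]
    exact summable_geometric_of_lt_one (by positivity)
      (Real.rpow_lt_one (norm_nonneg r) hr hq)

theorem isClosedInLp_of_forall_tendsto (hp : 0 < p) {F W : Submodule 𝕜 (ℕ → 𝕜)}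
    (hFp : (F : Set (ℕ → 𝕜)) ⊆ {x | InLp p x}) (hFc : IsClosedInLp p (F : Set (ℕ → 𝕜)))
    (hWF : W ≤ F)
    (hW : ∀ f : ℕ → ℕ → 𝕜, (∀ j, f j ∈ W) → ∀ y ∈ F, Tendsto f atTop (𝓝 y) → y ∈ W) :
    IsClosedInLp p (W : Set (ℕ → 𝕜)) := fun f hf y hy h =>
  hW f hf y (hFc f (fun j => hWF (hf j)) y hy h) <| tendsto_pi_nhds.2 <|
    tendsto_apply_of_tendsto_dp hp (fun j => hFp (hWF (hf j))) hy h

end Lp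

section Constructions

variable {𝕜 : Type} [RCLike 𝕜]

theorem exists_submodule_rank_eq {α : Cardinal} (hα : α ≤ 𝔠) :
    ∃ V : Submodule 𝕜 (ℕ → 𝕜), Module.rank 𝕜 V = α ∧
      V ≤ c₀ 𝕜 ⊓ eventuallyZeroAlong 𝕜 (2 * · + 1) := by
  obtain ⟨s, hs, hsli, hsub⟩ :=
    exists_linearIndepOn_subset_c₀_supportedIn (𝕜 := 𝕜) (a := (2 * ·))
      (fun i j h => by simp only at h; omega) hα
  have hodd : ∀ k, 2 * k + 1 ∉ range (2 * ·) := by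
    rintro k ⟨m, hm⟩
    simp only at hm
    omega
  exact ⟨Submodule.span 𝕜 s, (rank_span_set hsli).trans hs, Submodule.span_le.2 fun x hx =>
    ⟨(hsub hx).1, supportedIn_le_eventuallyZeroAlong hodd (hsub hx).2⟩⟩

theorem exists_submodule_rank_eq_single_mem {α : Cardinal} (hα₀ : ℵ₀ ≤ α) (hα : α ≤ 𝔠) :
    ∃ V : Submodule 𝕜 (ℕ → 𝕜), Module.rank 𝕜 V = α ∧
      V ≤ c₀ 𝕜 ⊓ eventuallyZeroAlong 𝕜 (2 * · + 1) ∧ ∀ k, Pi.single k 1 ∈ V := by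
  obtain ⟨V, hrank, hV⟩ := exists_submodule_rank_eq (𝕜 := 𝕜) hα
  let S : Submodule 𝕜 (ℕ → 𝕜) := Submodule.span 𝕜 (range fun k => Pi.single k 1)
  have hS : Module.rank 𝕜 S ≤ ℵ₀ := (rank_span_le _).trans (mk_range_le.trans_eq mk_nat)
  refine ⟨V ⊔ S, le_antisymm ?_ ?_, sup_le hV (Submodule.span_le.2 ?_),
    fun k => Submodule.mem_sup_right (Submodule.subset_span ⟨k, rfl⟩)⟩
  · calc Module.rank 𝕜 ↥(V ⊔ S) ≤ Module.rank 𝕜 V + Module.rank 𝕜 S :=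
          Submodule.rank_add_le_rank_add_rank V S
      _ ≤ α + ℵ₀ := add_le_add hrank.le hS
      _ = α := add_eq_left hα₀ hα₀
  · exact hrank ▸ Submodule.rank_mono le_sup_left
  · rintro _ ⟨k, rfl⟩
    have hodd : Tendsto (2 * · + 1) atTop atTop :=
      tendsto_atTop_mono (fun k => show k ≤ 2 * k + 1 by omega) tendsto_id
    exact ⟨single_mem_c₀ k 1, single_mem_eventuallyZeroAlong hodd k 1⟩

theorem mem_sup_inf_supportedIn_of_tendsto {V F : Submodule 𝕜 (ℕ → 𝕜)} [FiniteDimensional 𝕜 V]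
    (hVF : V ≤ F) {S : Set ℕ} (hVS : V ≤ supportedIn 𝕜 Sᶜ) {f : ℕ → ℕ → 𝕜}
    (hf : ∀ j, f j ∈ V ⊔ F ⊓ supportedIn 𝕜 S) {y : ℕ → 𝕜} (hyF : y ∈ F)
    (hfy : Tendsto f atTop (𝓝 y)) : y ∈ V ⊔ F ⊓ supportedIn 𝕜 S := by
  -- restriction to `Sᶜ` is coordinatewise continuous and projects the sum onto `V`
  have hproj : ∀ z ∈ V ⊔ F ⊓ supportedIn 𝕜 S, Sᶜ.indicator z ∈ V := by
    intro z hz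
    obtain ⟨v, hv, c, hc, rfl⟩ := Submodule.mem_sup.1 hz
    rw [indicator_add', indicator_eq_self.2 (hVS hv),
      indicator_eq_zero'.2 (disjoint_compl_right_iff_subset.2 hc.2), add_zero]
    exact hv
  have hlim : Tendsto (fun j => Sᶜ.indicator (f j)) atTop (𝓝 (Sᶜ.indicator y)) :=
    tendsto_pi_nhds.2 fun n => by
      by_cases hn : n ∈ Sᶜ <;> simp [hn, tendsto_pi_nhds.1 hfy n]
  have hyV : Sᶜ.indicator y ∈ V := V.closed_of_finiteDimensional.mem_of_tendsto hlim
    (Eventually.of_forall fun j => hproj _ (hf j))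
  rw [← indicator_compl_add_self S y]
  refine Submodule.add_mem_sup hyV ⟨?_, support_indicator_subset⟩
  rw [eq_sub_of_add_eq' (indicator_compl_add_self S y)]
  exact F.sub_mem hyF (hVF hyV)

theorem exists_closedInLp_rank_eq_continuum {p : ℝ≥0∞} (hp : 0 < p) {F : Submodule 𝕜 (ℕ → 𝕜)}
    (hFp : (F : Set (ℕ → 𝕜)) ⊆ {x | InLp p x}) (hFc : IsClosedInLp p (F : Set (ℕ → 𝕜)))
    (hc0 : c₀ 𝕜 ≤ F) {V : Submodule 𝕜 (ℕ → 𝕜)} [FiniteDimensional 𝕜 V] (hVF : V ≤ F)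
    (hV : ∀ x ∈ V, {n | x n = 0}.Infinite) :
    ∃ W : Submodule 𝕜 (ℕ → 𝕜), V ≤ W ∧ W ≤ F ∧ IsClosedInLp p (W : Set (ℕ → 𝕜)) ∧
      Module.rank 𝕜 W = 𝔠 ∧ ∀ x ∈ W, {n | x n = 0}.Infinite := by
  have : Uncountable 𝕜 := RCLike.ofReal_injective.uncountable
  let e := (V.infinite_setOf_forall_eq_zero hV).natEmbedding
  let a₁ : ℕ → ℕ := fun k => e (2 * k)
  let a₂ : ℕ → ℕ := fun k => e (2 * k + 1)
  have ha₁ : Injective a₁ := fun i j h => by simpa using e.injective (Subtype.ext h)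
  have ha₂ : Injective a₂ := fun i j h => by simpa using e.injective (Subtype.ext h)
  have ha₁₂ : ∀ k, a₂ k ∉ range a₁ := by
    rintro k ⟨m, hm⟩
    have := e.injective (Subtype.ext hm)
    omega
  have hVa₁ : V ≤ supportedIn 𝕜 (range a₁)ᶜ := by
    rintro x hx n hn ⟨k, rfl⟩
    exact hn ((e (2 * k)).2 x hx)
  obtain ⟨s, hs, hsli, hsub⟩ := exists_linearIndepOn_subset_c₀_supportedIn (𝕜 := 𝕜) ha₁ le_rfl
  have hWF : V ⊔ F ⊓ supportedIn 𝕜 (range a₁) ≤ F := sup_le hVF inf_le_left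
  refine ⟨V ⊔ F ⊓ supportedIn 𝕜 (range a₁), le_sup_left, hWF,
    isClosedInLp_of_forall_tendsto hp hFp hFc hWF fun f hf y hy hfy =>
      mem_sup_inf_supportedIn_of_tendsto hVF hVa₁ hf hy hfy,
    le_antisymm (rank_le_continuum _) ?_, fun x hx =>
      infinite_setOf_eq_zero_of_mem_eventuallyZeroAlong ha₂
        ((show _ ≤ eventuallyZeroAlong 𝕜 a₂ from sup_le ?_ ?_) hx)⟩
  · rw [← hs, ← rank_span_set hsli]
    exact Submodule.rank_mono <| Submodule.span_le.2 fun x hx =>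
      Submodule.mem_sup_right ⟨hc0 (hsub hx).1, (hsub hx).2⟩
  · exact fun x hx => Eventually.of_forall fun k => (e (2 * k + 1)).2 x hx
  · exact inf_le_right.trans (supportedIn_le_eventuallyZeroAlong ha₁₂)

end Constructions

theorem stmt17_general {𝕜 : Type} [RCLike 𝕜] (p : ℝ≥0∞) (hp : 0 < p)
    (F : Submodule 𝕜 (ℕ → 𝕜))
    (hFp : (↑F : Set (ℕ → 𝕜)) ⊆ {x | InLp p x})
    (hFc : IsClosedInLp p (↑F : Set (ℕ → 𝕜)))
    (hc0 : ∀ x : ℕ → 𝕜, Tendsto x atTop (nhds 0) → x ∈ F)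
    (α : Cardinal) (hα : α ≤ Cardinal.continuum) :
    ((∃ V : Submodule 𝕜 (ℕ → 𝕜), V ≤ F ∧ Module.rank 𝕜 ↥V = α ∧
        ∀ x ∈ V, {n : ℕ | x n = 0}.Infinite) ∧
      ∀ V : Submodule 𝕜 (ℕ → 𝕜), V ≤ F → Module.rank 𝕜 ↥V = α →
        (∀ x ∈ V, {n : ℕ | x n = 0}.Infinite) →
        ∃ W : Submodule 𝕜 (ℕ → 𝕜), V ≤ W ∧ W ≤ F ∧
          IsClosedInLp p (↑W : Set (ℕ → 𝕜)) ∧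
          Module.rank 𝕜 ↥W = Cardinal.continuum ∧
          ∀ x ∈ W, {n : ℕ | x n = 0}.Infinite)
    ↔ α < Cardinal.aleph0 := by
  have hc0F : c₀ 𝕜 ≤ F := fun x hx => hc0 x hx
  have hzero : ∀ x ∈ eventuallyZeroAlong 𝕜 (2 * · + 1), {n | x n = 0}.Infinite :=
    fun x => infinite_setOf_eq_zero_of_mem_eventuallyZeroAlong fun i j h => by omega
  constructor
  · rintro ⟨-, hspaceable⟩
    by_contra! hinf
    obtain ⟨V, hrank, hV, hsingle⟩ := exists_submodule_rank_eq_single_mem (𝕜 := 𝕜) hinf hα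
    obtain ⟨W, hVW, -, hWc, -, hW⟩ :=
      hspaceable V (hV.trans (inf_le_left.trans hc0F)) hrank fun x hx => hzero x (hV hx).2
    have hr : ‖(2⁻¹ : 𝕜)‖ < 1 := by norm_num
    simpa using hW _ <| hWc.mem_of_single_mem hp (fun k => hVW (hsingle k))
      (inLp_geometric hp hr) (tendsto_pow_atTop_nhds_zero_of_norm_lt_one hr)
  · intro hfin
    obtain ⟨V, hrank, hV⟩ := exists_submodule_rank_eq (𝕜 := 𝕜) hα
    refine ⟨⟨V, hV.trans (inf_le_left.trans hc0F), hrank, fun x hx => hzero x (hV hx).2⟩,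
      fun U hUF hUrank hU => ?_⟩
    have : FiniteDimensional 𝕜 U := Module.rank_lt_aleph0_iff.1 (hUrank ▸ hfin)
    exact exists_closedInLp_rank_eq_continuum hp hFp hFc hc0F hUF hU

/-- Let `p ∈ (0,∞]`, let `F` be an infinite-dimensional
closed subspace of `ℓ_p` containing `c₀`, and let `α` be a nonzero cardinal
with `α ≤ 𝔠`.  Then `F \ Z(F)` is `(α, 𝔠)`-spaceable if and only if `α` is
finite. -/
theorem stmt17 {𝕜 : Type} [RCLike 𝕜] (p : ℝ≥0∞) (hp : 0 < p)
    (F : Submodule 𝕜 (ℕ → 𝕜))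
    (hFp : (↑F : Set (ℕ → 𝕜)) ⊆ {x | InLp p x})
    (hFc : IsClosedInLp p (↑F : Set (ℕ → 𝕜)))
    (hFdim : Cardinal.aleph0 ≤ Module.rank 𝕜 ↥F)
    (hc0 : ∀ x : ℕ → 𝕜, Tendsto x atTop (nhds 0) → x ∈ F)
    (α : Cardinal) (hα₀ : α ≠ 0) (hα : α ≤ Cardinal.continuum) :
    ((∃ V : Submodule 𝕜 (ℕ → 𝕜), V ≤ F ∧ Module.rank 𝕜 ↥V = α ∧
        ∀ x ∈ V, {n : ℕ | x n = 0}.Infinite) ∧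
      ∀ V : Submodule 𝕜 (ℕ → 𝕜), V ≤ F → Module.rank 𝕜 ↥V = α →
        (∀ x ∈ V, {n : ℕ | x n = 0}.Infinite) →
        ∃ W : Submodule 𝕜 (ℕ → 𝕜), V ≤ W ∧ W ≤ F ∧
          IsClosedInLp p (↑W : Set (ℕ → 𝕜)) ∧
          Module.rank 𝕜 ↥W = Cardinal.continuum ∧
          ∀ x ∈ W, {n : ℕ | x n = 0}.Infinite)
    ↔ α < Cardinal.aleph0 :=
  stmt17_general p hp F hFp hFc hc0 α hα
end

section
/- Let 𝕜 be ℝ or ℂ, let (t_j)_{j≥1} be a bounded sequence in 𝕜, and let (n_k)_{k≥1} be a strictly increasing sequence of positive integers with n_1 > 2. If for every k the absolutely convergent series satisfies t_1 + ∑_{j=2}^∞ t_j j^{-n_k} = 0, then t_j = 0 for all j ≥ 1. -/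
open Filter

/-- Let `𝕜` be `ℝ` or `ℂ`, let `(t_j)_{j ≥ 1}` be a bounded
sequence in `𝕜`, and let `(n_k)_{k ≥ 1}` be a strictly increasing sequence of
positive integers with `n 1 > 2`.  If for every `k ≥ 1` the (absolutely
convergent) series satisfies `t 1 + ∑_{j=2}^∞ t_j j^{-n_k} = 0`, then
`t j = 0` for all `j ≥ 1`. -/
theorem stmt18 {𝕜 : Type} [RCLike 𝕜] (t : ℕ → 𝕜)
    (ht : ∃ C : ℝ, ∀ j, ‖t j‖ ≤ C)
    (n : ℕ → ℕ) (hn : StrictMono n) (hnpos : ∀ k, 0 < n k) (hn1 : 2 < n 1)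
    (hzero : ∀ k : ℕ, 1 ≤ k →
      t 1 + ∑' j : {j : ℕ // 2 ≤ j},
        (((j.1 : ℝ) ^ (-(n k : ℝ)) : ℝ) • t j.1) = 0) :
    ∀ j : ℕ, 1 ≤ j → t j = 0 := by
  obtain ⟨C, hC⟩ := ht
  have hC0 : 0 ≤ C := (norm_nonneg _).trans (hC 0)
  have h3 : ∀ k, 1 ≤ k → 3 ≤ n k := fun k hk =>
    le_trans (by omega) (hn.le_iff_le.mpr hk)
  set G : ℕ → ℕ → 𝕜 := fun k j => if 2 ≤ j then ((j : ℝ) ^ (n k))⁻¹ • t j else 0 with hG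
  have habs : Summable (fun j : ℕ => C * ((j : ℝ) ^ 3)⁻¹) :=
    (Real.summable_nat_pow_inv.mpr (by norm_num)).mul_left C
  have hGsum : ∀ k, 1 ≤ k → Summable (G k) := by
    intro k hk
    apply Summable.of_norm_bounded habs
    intro j
    by_cases hj : 2 ≤ j
    · simp only [hG, if_pos hj, norm_smul, Real.norm_eq_abs]
      have hj1 : (1 : ℝ) ≤ (j : ℝ) := by exact_mod_cast le_trans (by norm_num) hj
      have hpow : ((j : ℝ) ^ (n k))⁻¹ ≤ ((j : ℝ) ^ 3)⁻¹ := by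
        apply inv_anti₀ (by positivity)
        exact pow_le_pow_right₀ hj1 (h3 k hk)
      calc |((j : ℝ) ^ (n k))⁻¹| * ‖t j‖ = ((j : ℝ) ^ (n k))⁻¹ * ‖t j‖ := by
            rw [abs_of_nonneg (by positivity)]
        _ ≤ ((j : ℝ) ^ 3)⁻¹ * C :=
            mul_le_mul hpow (hC j) (norm_nonneg _) (by positivity)
        _ = C * ((j : ℝ) ^ 3)⁻¹ := mul_comm _ _
    · simp only [hG, if_neg hj, norm_zero]
      positivity
  have hz : ∀ k, 1 ≤ k → t 1 + ∑' j : ℕ, G k j = 0 := by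
    intro k hk
    have h0 := hzero k hk
    have e1 : (∑' j : {j : ℕ // 2 ≤ j}, (((j.1 : ℝ) ^ (-(n k : ℝ)) : ℝ) • t j.1))
        = ∑' j : {j : ℕ // 2 ≤ j}, G k j.1 := by
      apply tsum_congr
      intro j
      rw [hG]
      simp only [if_pos j.2]
      congr 1
      rw [Real.rpow_neg (by positivity), Real.rpow_natCast]
    have e0 : (∑' j : {j : ℕ // 2 ≤ j}, G k j.1)
        = ∑' j : ↑{j : ℕ | 2 ≤ j}, G k j.1 := rfl
    have e2 : (∑' j : ↑{j : ℕ | 2 ≤ j}, G k j.1) = ∑' j : ℕ, G k j := by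
      apply tsum_subtype_eq_of_support_subset
      intro j hj
      by_contra hmem
      apply hj
      rw [hG]
      simp only [Set.mem_setOf_eq] at hmem
      simp [hmem]
    rw [e1, e0, e2] at h0
    exact h0
  intro m
  induction m using Nat.strong_induction_on with
  | _ m IH =>
    intro hm
    have hm1 : (1 : ℝ) ≤ (m : ℝ) := by exact_mod_cast hm
    have hmpos : (0 : ℝ) < m := by linarith
    set F : ℕ → ℕ → 𝕜 := fun k j =>
      if m < j then (((m : ℝ) / j) ^ (n k)) • t j else 0 with hF
    have key : ∀ k, 1 ≤ k → t m = -∑' j, F k j := by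
      intro k hk
      have hsum := hGsum k hk
      have hsplit := Summable.tsum_eq_add_tsum_ite hsum m
      have hz' := hz k hk
      have hpt : ∀ j, ((m : ℝ) ^ (n k)) • (if j = m then 0 else G k j) = F k j := by
        intro j
        by_cases hjm : j = m
        · simp [hF, hjm]
        · simp only [if_neg hjm]
          by_cases hj2 : 2 ≤ j
          · by_cases hjgt : m < j
            · simp only [hG, hF, if_pos hj2, if_pos hjgt, smul_smul]
              congr 1
              rw [div_pow, div_eq_mul_inv]
            · have hjlt : j < m := lt_of_le_of_ne (not_lt.mp hjgt) hjm
              have ht0 : t j = 0 := IH j hjlt (by omega)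
              simp [hG, hF, if_pos hj2, if_neg hjgt, ht0]
          · have hjgt : ¬ m < j := by omega
            simp [hG, hF, if_neg hj2, if_neg hjgt]
      have hsum' : Summable (fun j => if j = m then 0 else G k j) := by
        apply Summable.of_norm_bounded habs
        intro j
        by_cases hjm : j = m
        · simp only [if_pos hjm, norm_zero]
          positivity
        · simp only [if_neg hjm]
          by_cases hj : 2 ≤ j
          · simp only [hG, if_pos hj, norm_smul, Real.norm_eq_abs]
            have hj1 : (1 : ℝ) ≤ (j : ℝ) := by exact_mod_cast le_trans (by norm_num) hj
            have hpow : ((j : ℝ) ^ (n k))⁻¹ ≤ ((j : ℝ) ^ 3)⁻¹ := by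
              apply inv_anti₀ (by positivity)
              exact pow_le_pow_right₀ hj1 (h3 k hk)
            calc |((j : ℝ) ^ (n k))⁻¹| * ‖t j‖ = ((j : ℝ) ^ (n k))⁻¹ * ‖t j‖ := by
                  rw [abs_of_nonneg (by positivity)]
              _ ≤ ((j : ℝ) ^ 3)⁻¹ * C :=
                  mul_le_mul hpow (hC j) (norm_nonneg _) (by positivity)
              _ = C * ((j : ℝ) ^ 3)⁻¹ := mul_comm _ _
          · simp only [hG, if_neg hj, norm_zero]
            positivity
      have hsmul := (hsum'.hasSum.const_smul ((m : ℝ) ^ (n k))).tsum_eq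
      have hts : ∑' j, F k j
          = ((m : ℝ) ^ (n k)) • ∑' j, (if j = m then 0 else G k j) := by
        rw [← hsmul]
        exact tsum_congr fun j => (hpt j).symm
      rcases eq_or_lt_of_le hm with hm1' | hm2
      · -- m = 1
        have hme : m = 1 := hm1'.symm
        subst hme
        have hG1 : G k 1 = 0 := by simp [hG]
        rw [hsplit, hG1, zero_add] at hz'
        rw [hts]
        simp only [Nat.cast_one, one_pow, one_smul]
        exact eq_neg_of_add_eq_zero_left hz'
      · -- 2 ≤ m
        have ht1 : t 1 = 0 := IH 1 hm2 le_rfl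
        rw [hsplit, ht1, zero_add] at hz'
        have hGm : G k m = ((m : ℝ) ^ (n k))⁻¹ • t m := by
          rw [hG]; simp only [if_pos (by omega : 2 ≤ m)]
        rw [hGm] at hz'
        have hne : ((m : ℝ) ^ (n k)) ≠ 0 := by positivity
        have : ((m : ℝ) ^ (n k))⁻¹ • t m
            = -∑' j, (if j = m then 0 else G k j) :=
          eq_neg_of_add_eq_zero_left hz'
        calc t m = ((m : ℝ) ^ (n k)) • (((m : ℝ) ^ (n k))⁻¹ • t m) := by
              rw [smul_smul, mul_inv_cancel₀ hne, one_smul]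
          _ = ((m : ℝ) ^ (n k)) • (-∑' j, (if j = m then 0 else G k j)) := by rw [this]
          _ = -(((m : ℝ) ^ (n k)) • ∑' j, (if j = m then 0 else G k j)) := by
              rw [smul_neg]
          _ = -∑' j, F k j := by rw [hts]
    have hbound : Summable (fun j : ℕ => if m < j then C * ((m : ℝ) / j) ^ 3 else 0) := by
      apply Summable.of_nonneg_of_le (f := fun j : ℕ => (C * (m : ℝ) ^ 3) * ((j : ℝ) ^ 3)⁻¹)
      · intro j
        by_cases hj : m < j
        · simp only [if_pos hj]
          positivity
        · simp [if_neg hj]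
      · intro j
        by_cases hj : m < j
        · simp only [if_pos hj]
          apply le_of_eq
          rw [div_pow, div_eq_mul_inv]
          ring
        · simp only [if_neg hj]
          have h1 : (0:ℝ) ≤ ((j : ℝ) ^ 3)⁻¹ := by positivity
          have h2 : (0:ℝ) ≤ (m : ℝ) ^ 3 := by positivity
          exact mul_nonneg (mul_nonneg hC0 h2) h1
      · exact (Real.summable_nat_pow_inv.mpr (by norm_num)).mul_left _
    have hpt2 : ∀ j : ℕ, Tendsto (fun k => F (k + 1) j) atTop (nhds 0) := by
      intro j
      by_cases hj : m < j
      · simp only [hF, if_pos hj]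
        have hjpos : (0 : ℝ) < j := by
          have : 0 < j := by omega
          exact_mod_cast this
        have hlt : (m : ℝ) / j < 1 := by
          rw [div_lt_one hjpos]
          exact_mod_cast hj
        have hge : (0 : ℝ) ≤ (m : ℝ) / j := by positivity
        have h1 : Tendsto (fun i : ℕ => ((m : ℝ) / j) ^ i) atTop (nhds 0) :=
          tendsto_pow_atTop_nhds_zero_of_lt_one hge hlt
        have h2 : Tendsto (fun k : ℕ => n (k + 1)) atTop atTop :=
          hn.tendsto_atTop.comp (tendsto_add_atTop_nat 1)
        have h4 := (h1.comp h2).smul_const (t j)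
        simpa using h4
      · simp only [hF, if_neg hj]
        exact tendsto_const_nhds
    have hbd : ∀ (k : ℕ) (j : ℕ), ‖F (k + 1) j‖ ≤
        (if m < j then C * ((m : ℝ) / j) ^ 3 else 0) := by
      intro k j
      by_cases hj : m < j
      · simp only [hF, if_pos hj, norm_smul, Real.norm_eq_abs]
        have hjpos : (0 : ℝ) < j := by
          have : 0 < j := by omega
          exact_mod_cast this
        have hle1 : (m : ℝ) / j ≤ 1 := by
          rw [div_le_one hjpos]
          exact_mod_cast le_of_lt hj
        have hge : (0 : ℝ) ≤ (m : ℝ) / j := by positivity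
        have hpow : ((m : ℝ) / j) ^ (n (k + 1)) ≤ ((m : ℝ) / j) ^ 3 :=
          pow_le_pow_of_le_one hge hle1 (h3 (k + 1) (by omega))
        calc |((m : ℝ) / j) ^ (n (k + 1))| * ‖t j‖
            = ((m : ℝ) / j) ^ (n (k + 1)) * ‖t j‖ := by
              rw [abs_of_nonneg (by positivity)]
          _ ≤ ((m : ℝ) / j) ^ 3 * C :=
              mul_le_mul hpow (hC j) (norm_nonneg _) (by positivity)
          _ = C * ((m : ℝ) / j) ^ 3 := mul_comm _ _
      · simp [hF, if_neg hj]
    have hS : Tendsto (fun k => ∑' j, F (k + 1) j) atTop (nhds 0) := by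
      have hdom := tendsto_tsum_of_dominated_convergence (𝓕 := (atTop : Filter ℕ))
        (g := fun _ : ℕ => (0 : 𝕜)) hbound hpt2 (Eventually.of_forall hbd)
      simpa using hdom
    have hconst : Tendsto (fun _ : ℕ => t m) atTop (nhds 0) := by
      have h1 := hS.neg
      rw [neg_zero] at h1
      exact h1.congr fun k => (key (k + 1) (by omega)).symm
    exact tendsto_nhds_unique tendsto_const_nhds hconst
end
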